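/- arXiv:2301.06200 — 10 statements merged into one kernel-verified Lean document; each statement's English description precedes it below -/
import Mathlib

section
/- Let q ≥ 2, n ≥ 1, 1 ≤ b ≤ n, B = q^b, and suppose f[m] = Σ_{k ∈ (ZMod q)^n} F[k]·ω^{⟨m,k⟩} for a function F : (ZMod q)^n → ℂ. Let M ∈ (ZMod q)^{n×b} be a matrix and d ∈ (ZMod q)^n an offset, and define the subsampled transform U[j] = (1/B) Σ_{ℓ ∈ (ZMod q)^b} f[Mℓ + d]·ω^{−⟨j,ℓ⟩} for j ∈ (ZMod q)^b. Then for every j, U[j] = Σ_{k : Mᵀk = j} F[k]·ω^{⟨d,k⟩}, i.e., the subsampled Fourier coefficients are aliased sums of the original coefficients, modulated by the offset. -/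
/-- Aliasing of subsampled Fourier coefficients. If
`f[m] = Σ_k F[k]·ω^{⟨m,k⟩}` and `U[j] = (1/B) Σ_ℓ f[Mℓ + d]·ω^{−⟨j,ℓ⟩}` with `B = q^b`,
then `U[j] = Σ_{k : Mᵀk = j} F[k]·ω^{⟨d,k⟩}`. -/
theorem subsampled_aliasing
    (q n b : ℕ) [NeZero q] (hq : 2 ≤ q) (hn : 1 ≤ n) (hb : 1 ≤ b) (hbn : b ≤ n)
    (ω : ℂ) (hω : ω = Complex.exp (2 * (Real.pi : ℂ) * Complex.I / (q : ℂ)))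
    (f F : (Fin n → ZMod q) → ℂ)
    (hf : ∀ m, f m = ∑ k, F k * ω ^ (∑ i, m i * k i).val)
    (M : Matrix (Fin n) (Fin b) (ZMod q)) (d : Fin n → ZMod q)
    (U : (Fin b → ZMod q) → ℂ)
    (hU : ∀ j, U j = (1 / (q : ℂ) ^ b) *
      ∑ ℓ, f (M.mulVec ℓ + d) * ω ^ (-(∑ i, j i * ℓ i) : ZMod q).val) :
    ∀ j, U j = ∑ k ∈ Finset.univ.filter (fun k => M.transpose.mulVec k = j),
      F k * ω ^ (∑ i, d i * k i).val := by
  intro j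
  have hq0 : q ≠ 0 := NeZero.ne q
  have hqC : (q : ℂ) ≠ 0 := Nat.cast_ne_zero.mpr hq0
  have hprim : IsPrimitiveRoot ω q := by
    rw [hω]; exact Complex.isPrimitiveRoot_exp q hq0
  have hω1 : ω ^ q = 1 := hprim.pow_eq_one
  -- additivity of c ↦ ω ^ c.val
  have hadd : ∀ a c : ZMod q, ω ^ (a + c).val = ω ^ a.val * ω ^ c.val := by
    intro a c
    rw [ZMod.val_add, ← pow_eq_pow_mod _ hω1, pow_add]
  -- sum-to-product
  have hmap_sum : ∀ (g : Fin b → ZMod q),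
      ω ^ ((∑ i, g i).val) = ∏ i, ω ^ ((g i).val) := by
    intro g
    induction (Finset.univ : Finset (Fin b)) using Finset.cons_induction with
    | empty => simp
    | cons a s ha ih => rw [Finset.sum_cons, Finset.prod_cons, hadd, ih]
  -- orthogonality sum
  have hsum : ∀ v : ZMod q, (∑ t : ZMod q, ω ^ ((v * t).val)) =
      if v = 0 then (q : ℂ) else 0 := by
    intro v
    have hterm : ∀ t : ZMod q, ω ^ ((v * t).val) = (ω ^ v.val) ^ t.val := by
      intro t
      rw [ZMod.val_mul, ← pow_eq_pow_mod _ hω1, pow_mul]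
    by_cases hv : v = 0
    · simp [hv, Finset.card_univ, ZMod.card]
    · rw [if_neg hv]
      have hζ1 : ω ^ v.val ≠ 1 := by
        intro h
        rw [hprim.pow_eq_one_iff_dvd] at h
        have hlt := ZMod.val_lt v
        have hv0 : v.val ≠ 0 := by
          simpa [ZMod.val_eq_zero] using hv
        exact hv0 (Nat.eq_zero_of_dvd_of_lt h hlt)
      have hζq : (ω ^ v.val) ^ q = 1 := by
        rw [← pow_mul, mul_comm, pow_mul, hω1, one_pow]
      have hbij : (∑ t : ZMod q, (ω ^ v.val) ^ t.val) =
          ∑ i ∈ Finset.range q, (ω ^ v.val) ^ i := by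
        refine Finset.sum_nbij' (fun t => t.val) (fun i => (i : ZMod q)) ?_ ?_ ?_ ?_ ?_
        · intro t _; exact Finset.mem_range.mpr (ZMod.val_lt t)
        · intro i _; exact Finset.mem_univ _
        · intro t _; simp [ZMod.natCast_val, ZMod.cast_id]
        · intro i hi; exact ZMod.val_cast_of_lt (Finset.mem_range.mp hi)
        · intro t _; rfl
      simp only [hterm]
      rw [hbij, geom_sum_eq hζ1 q, hζq]
      simp
  rw [hU j]
  -- rewrite each term of the ℓ-sum
  have key : ∀ ℓ : Fin b → ZMod q,
      f (M.mulVec ℓ + d) * ω ^ ((-(∑ i, j i * ℓ i) : ZMod q)).val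
      = ∑ k, (F k * ω ^ ((∑ i, d i * k i).val)) *
          ∏ i, ω ^ (((M.transpose.mulVec k i - j i) * ℓ i).val) := by
    intro ℓ
    rw [hf, Finset.sum_mul]
    refine Finset.sum_congr rfl fun k _ => ?_
    have e1 : (∑ i, (M.mulVec ℓ + d) i * k i)
        = (∑ i, (M.mulVec ℓ) i * k i) + ∑ i, d i * k i := by
      simp [add_mul, Finset.sum_add_distrib]
    have e2 : (∑ i, (M.mulVec ℓ) i * k i)
        = ∑ l, (M.transpose.mulVec k) l * ℓ l := by
      simp only [Matrix.mulVec, dotProduct, Matrix.transpose_apply, Finset.sum_mul]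
      rw [Finset.sum_comm]
      exact Finset.sum_congr rfl fun l _ => Finset.sum_congr rfl fun i _ => by ring
    have e3 : (∑ l, (M.transpose.mulVec k) l * ℓ l)
        = (∑ l, (M.transpose.mulVec k l - j l) * ℓ l) + ∑ l, j l * ℓ l := by
      simp [sub_mul, Finset.sum_sub_distrib]
    have h1 : (∑ i, (M.mulVec ℓ + d) i * k i)
        = ((∑ l, (M.transpose.mulVec k l - j l) * ℓ l) + (∑ l, j l * ℓ l))
          + ∑ i, d i * k i := by
      rw [e1, e2, e3]
    rw [h1, hadd, hadd]
    have hYnegY : ω ^ ((∑ i, j i * ℓ i : ZMod q)).val *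
        ω ^ ((-(∑ i, j i * ℓ i) : ZMod q)).val = 1 := by
      rw [← hadd]
      simp
    rw [← hmap_sum]
    calc F k * (ω ^ ((∑ l, (M.transpose.mulVec k l - j l) * ℓ l : ZMod q)).val *
            ω ^ ((∑ i, j i * ℓ i : ZMod q)).val *
            ω ^ ((∑ i, d i * k i : ZMod q)).val) *
          ω ^ ((-(∑ i, j i * ℓ i) : ZMod q)).val
        = (F k * ω ^ ((∑ i, d i * k i : ZMod q)).val *
            ω ^ ((∑ l, (M.transpose.mulVec k l - j l) * ℓ l : ZMod q)).val) *
          (ω ^ ((∑ i, j i * ℓ i : ZMod q)).val *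
            ω ^ ((-(∑ i, j i * ℓ i) : ZMod q)).val) := by ring
      _ = F k * ω ^ ((∑ i, d i * k i : ZMod q)).val *
            ω ^ ((∑ l, (M.transpose.mulVec k l - j l) * ℓ l : ZMod q)).val := by
          rw [hYnegY, mul_one]
  simp only [key]
  rw [Finset.sum_comm]
  have hswap : ∀ k : Fin n → ZMod q,
      (∑ ℓ : Fin b → ZMod q, (F k * ω ^ ((∑ i, d i * k i).val)) *
        ∏ i, ω ^ (((M.transpose.mulVec k i - j i) * ℓ i).val))
      = (F k * ω ^ ((∑ i, d i * k i).val)) *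
        (if M.transpose.mulVec k = j then ((q : ℂ) ^ b) else 0) := by
    intro k
    rw [← Finset.mul_sum]
    congr 1
    rw [← Fintype.prod_sum (fun i t => ω ^ (((M.transpose.mulVec k i - j i) * t).val))]
    by_cases hk : M.transpose.mulVec k = j
    · rw [if_pos hk]
      have : ∀ i, M.transpose.mulVec k i - j i = 0 := by
        intro i; rw [hk]; ring
      calc (∏ i : Fin b, ∑ t : ZMod q, ω ^ (((M.transpose.mulVec k i - j i) * t).val))
          = ∏ i : Fin b, (q : ℂ) := by
            refine Finset.prod_congr rfl fun i _ => ?_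
            rw [hsum, if_pos (this i)]
        _ = (q : ℂ) ^ b := by simp
    · rw [if_neg hk]
      have : ∃ i, M.transpose.mulVec k i - j i ≠ 0 := by
        by_contra h
        push_neg at h
        apply hk
        funext i
        have := h i
        linear_combination this
      obtain ⟨i, hi⟩ := this
      refine Finset.prod_eq_zero (Finset.mem_univ i) ?_
      rw [hsum, if_neg hi]
  simp only [hswap]
  rw [Finset.sum_filter, Finset.mul_sum]
  refine Finset.sum_congr rfl fun k _ => ?_
  by_cases hk : M.transpose.mulVec k = j
  · rw [if_pos hk, if_pos hk]
    field_simp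
  · rw [if_neg hk, if_neg hk]
    ring
end

section
/- Let q be a prime, and let n, t be positive integers with 2t ≤ n. Set P = 2t·⌈log_q n⌉. Then there exists a matrix D ∈ (ZMod q)^{P×n} such that every vector k ∈ (ZMod q)^n of Hamming weight at most t can be exactly recovered from Dk; equivalently, the map k ↦ Dk is injective on the set {k ∈ (ZMod q)^n : ‖k‖₀ ≤ t}, i.e., any nonzero k with ‖k‖₀ ≤ 2t satisfies Dk ≠ 0. -/
/-!
Choose distinct points `x₁, …, xₙ` of `𝔽_{q^m}` with `m = ⌈log_q n⌉`, possible since `n ≤ q^m`.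
A vector `c` with at most `2t` nonzero entries and `∑ᵢ cᵢ xᵢ^j = 0` for all `j < 2t` vanishes,
because the square Vandermonde matrix on the support of `c` is invertible. Expanding each entry
of the `2t × n` matrix `(xᵢ^j)` in an `𝔽_q`-basis of `𝔽_{q^m}` gives a `2tm × n` matrix over
`𝔽_q` with the same kernel on `𝔽_q`-vectors (the BCH subfield subcode of the Reed–Solomon code).
Two vectors of weight at most `t` with the same image differ by a kernel vector of weight at
most `2t`.
-/

open Function

namespace Matrix

section Vandermonde

variable {R α : Type*} [CommRing R] [IsDomain R] [Fintype α] {n : ℕ}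

theorem eq_zero_of_vecMul_rectVandermonde_eq_zero_of_card_le {v c : α → R}
    (hv : Injective v) (hα : Fintype.card α ≤ n) (h : c ᵥ* rectVandermonde v 1 n = 0) :
    c = 0 := by
  let e := Fintype.equivFin α
  have hsum (j : Fin (Fintype.card α)) :
      ∑ i, (c ∘ e.symm) i * (v ∘ e.symm) i ^ (j : ℕ) = 0 := by
    have := congrFun h ⟨j, j.2.trans_le hα⟩
    simpa [vecMul, dotProduct, rectVandermonde_apply,
      e.symm.sum_comp (fun i => c i * v i ^ (j : ℕ))] using this
  have := eq_zero_of_forall_pow_sum_mul_pow_eq_zero (hv.comp e.symm.injective) hsum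
  ext i
  simpa using congrFun this (e i)

theorem eq_zero_of_vecMul_rectVandermonde_eq_zero [DecidableEq R] {v c : α → R}
    (hv : Injective v) (hc : hammingNorm c ≤ n) (h : c ᵥ* rectVandermonde v 1 n = 0) :
    c = 0 := by
  have hsupport : (fun i : {i // c i ≠ 0} => c i) ᵥ*
      rectVandermonde (fun i : {i // c i ≠ 0} => v i) 1 n = 0 := by
    ext j
    rw [← congrFun h j]
    simp only [vecMul, dotProduct]
    exact (Finset.sum_subtype (p := fun i => c i ≠ 0) {i | c i ≠ 0} (by simp)
      (fun i => c i * rectVandermonde v 1 n i j)).symm.trans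
      (Finset.sum_filter_of_ne fun _ _ hne => left_ne_zero_of_mul hne)
  have := eq_zero_of_vecMul_rectVandermonde_eq_zero_of_card_le (hv.comp Subtype.val_injective)
    ((Fintype.card_subtype _).trans_le hc) hsupport
  ext i
  by_contra hi
  exact hi (congrFun this ⟨i, hi⟩)

end Vandermonde

section BasisExpansion

variable {K L ι κ ν : Type*} [CommSemiring K] [Semiring L] [Algebra K L]

noncomputable def basisExpansion (b : Module.Basis κ K L) (H : Matrix ι ν L) :
    Matrix (ι × κ) ν K :=
  of fun r i => b.repr (H r.1 i) r.2

variable [Fintype ν]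

theorem basisExpansion_mulVec_apply (b : Module.Basis κ K L) (H : Matrix ι ν L) (k : ν → K)
    (r : ι × κ) :
    (H.basisExpansion b *ᵥ k) r = b.repr ((H *ᵥ (algebraMap K L ∘ k)) r.1) r.2 := by
  simp [basisExpansion, mulVec, dotProduct, Finsupp.finsetSum_apply, ← Algebra.commutes,
    ← Algebra.smul_def, mul_comm (k _)]

theorem basisExpansion_mulVec_eq_zero_iff (b : Module.Basis κ K L) (H : Matrix ι ν L)
    (k : ν → K) : H.basisExpansion b *ᵥ k = 0 ↔ H *ᵥ (algebraMap K L ∘ k) = 0 := by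
  simp only [funext_iff, Prod.forall, basisExpansion_mulVec_apply, Pi.zero_apply]
  refine forall_congr' fun r => ?_
  rw [← b.repr.map_eq_zero_iff, Finsupp.ext_iff]
  rfl

end BasisExpansion

theorem basisExpansion_transpose_rectVandermonde_mulVec_ne_zero {K L ι κ : Type*} [Field K]
    [DecidableEq K] [Field L] [Algebra K L] [Fintype ι] {w : ℕ} (b : Module.Basis κ K L)
    {x : ι → L} (hx : Injective x) {k : ι → K} (hk : k ≠ 0) (hw : hammingNorm k ≤ w) :
    (rectVandermonde x 1 w)ᵀ.basisExpansion b *ᵥ k ≠ 0 := by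
  classical
  rw [Ne, basisExpansion_mulVec_eq_zero_iff, mulVec_transpose]
  intro h
  have hwL : hammingNorm (algebraMap K L ∘ k) ≤ w :=
    (hammingNorm_comp _ (fun _ => (algebraMap K L).injective) (fun _ => map_zero _)).trans_le hw
  have := eq_zero_of_vecMul_rectVandermonde_eq_zero hx hwL h
  exact hk (funext fun i => by simpa using congrFun this i)

theorem injOn_mulVec_setOf_hammingNorm_le {R m n : Type*} [Ring R] [DecidableEq R] [Fintype n]
    (D : Matrix m n R) {t : ℕ} (hD : ∀ k, k ≠ 0 → hammingNorm k ≤ 2 * t → D *ᵥ k ≠ 0) :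
    Set.InjOn D.mulVec {k | hammingNorm k ≤ t} := by
  intro k₁ hk₁ k₂ hk₂ heq
  by_contra hne
  refine hD (k₁ - k₂) (sub_ne_zero.2 hne) ?_ (by rw [mulVec_sub, heq, sub_self])
  calc hammingNorm (k₁ - k₂) = hammingDist k₂ k₁ := by
        rw [hammingDist_eq_hammingNorm, neg_add_eq_sub]
    _ ≤ hammingDist k₂ 0 + hammingDist 0 k₁ := hammingDist_triangle _ _ _
    _ = hammingNorm k₂ + hammingNorm k₁ := by rw [hammingDist_zero_right, hammingDist_zero_left]
    _ ≤ 2 * t := by simp only [Set.mem_ofPred_eq] at hk₁ hk₂; omega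

end Matrix

open Matrix

/-- Proposition 1: For prime `q` and positive `n, t` with `2t ≤ n`, with
`P = 2t·⌈log_q n⌉` there exists `D ∈ (ZMod q)^{P×n}` such that every `k` of Hamming
weight at most `t` can be recovered from `Dk`: the map `k ↦ Dk` is injective on
`{k : ‖k‖₀ ≤ t}`, i.e., any nonzero `k` with `‖k‖₀ ≤ 2t` satisfies `Dk ≠ 0`. -/
theorem exists_syndrome_matrix_low_weight_recovery
    (q n t : ℕ) (hq : q.Prime) (ht : 1 ≤ t) (hn : 2 * t ≤ n) :
    ∃ D : Matrix (Fin (2 * t * Nat.clog q n)) (Fin n) (ZMod q),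
      Set.InjOn D.mulVec
        {k : Fin n → ZMod q | (Finset.univ.filter (fun i => k i ≠ 0)).card ≤ t} ∧
      ∀ k : Fin n → ZMod q, k ≠ 0 →
        (Finset.univ.filter (fun i => k i ≠ 0)).card ≤ 2 * t → D.mulVec k ≠ 0 := by
  have : Fact q.Prime := ⟨hq⟩
  set m := Nat.clog q n
  have hm : m ≠ 0 := (Nat.clog_pos hq.one_lt (by omega)).ne'
  let b := Module.finBasisOfFinrankEq (ZMod q) (GaloisField q m) (GaloisField.finrank q hm)
  have : Fintype (GaloisField q m) := Fintype.ofFinite _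
  obtain ⟨x⟩ : Nonempty (Fin n ↪ GaloisField q m) := Function.Embedding.nonempty_of_card_le <| by
    rw [Fintype.card_fin, ← Nat.card_eq_fintype_card, GaloisField.card q m hm]
    exact Nat.le_pow_clog hq.one_lt n
  let H := (rectVandermonde x 1 (2 * t))ᵀ.basisExpansion b
  let D := H.submatrix finProdFinEquiv.symm (Equiv.refl _)
  have hD (k : Fin n → ZMod q) (hk : k ≠ 0) (hw : hammingNorm k ≤ 2 * t) : D *ᵥ k ≠ 0 := by
    intro hDk
    have hHk : (H *ᵥ k) ∘ finProdFinEquiv.symm = 0 :=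
      (submatrix_mulVec_equiv H k _ _).symm.trans hDk
    refine basisExpansion_transpose_rectVandermonde_mulVec_ne_zero b x.injective hk hw
      (funext fun r => ?_)
    simpa using congrFun hHk (finProdFinEquiv r)
  exact ⟨D, D.injOn_mulVec_setOf_hammingNorm_le hD, hD⟩
end

section
/- Let q ≥ 2 and let k be an integer with 0 ≤ k < q. If z ∈ ℂ is nonzero and can be written z = |z|·e^{i(2πk/q + θ)} for some real θ with −π/q < θ < π/q, then arg_q(z) ≡ k (mod q). In particular, arg_q(ω^a) = a for every a ∈ ZMod q, so the quantizer exactly recovers the exponent of a q-th root of unity and is robust to angular perturbations smaller than π/q. -/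
/-! Rotating by `e^{iπ/q}` turns the sector `|angle - 2πk/q| < π/q` into the sector
`(2πk/q, 2π(k+1)/q)`, on which `⌊q/(2π) · angle⌋ = k`. The principal argument differs from the
true angle by a multiple of `2π`, which the factor `q/(2π)` turns into a multiple of `q`,
invisible modulo `q`. -/

/-- The `q`-quantized argument `arg_q(z) = ⌊(q/(2π))·arg(z·e^{iπ/q})⌋`,
where `arg` is the principal argument taking values in `(−π, π]`. -/
noncomputable def argq (q : ℕ) (z : ℂ) : ℤ :=
  ⌊((q : ℝ) / (2 * Real.pi)) * (z * Complex.exp ((Real.pi : ℂ) * Complex.I / (q : ℂ))).arg⌋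

open Complex Real

theorem intCast_floor_div_mul_toIocMod {p : ℝ} (hp : 0 < p) (q : ℕ) (a x : ℝ) :
    ((⌊q / p * toIocMod hp a x⌋ : ℤ) : ZMod q) = ⌊q / p * x⌋ := by
  have hshift : q / p * toIocMod hp a x = q / p * x - ((toIocDiv hp a x * q : ℤ) : ℝ) := by
    rw [← self_sub_toIocDiv_mul]
    push_cast
    field_simp
  rw [hshift, Int.floor_sub_intCast, Int.cast_sub, Int.cast_mul, Int.cast_natCast,
    ZMod.natCast_self, mul_zero, sub_zero]

theorem arg_eq_toIocMod_of_eq_norm_mul_exp {z : ℂ} (hz : z ≠ 0) {φ : ℝ}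
    (hzφ : z = ‖z‖ * exp (I * φ)) : arg z = toIocMod two_pi_pos (-π) φ := by
  rw [hzφ, arg_real_mul _ (norm_pos_iff.mpr hz), mul_comm, arg_exp_mul_I]

theorem intCast_argq_eq_floor (q : ℕ) [NeZero q] {z : ℂ} (hz : z ≠ 0) {φ : ℝ}
    (hzφ : z = ‖z‖ * exp (I * φ)) :
    ((argq q z : ℤ) : ZMod q) = ⌊q / (2 * π) * φ + 1 / 2⌋ := by
  have hq : (q : ℝ) ≠ 0 := NeZero.ne _
  have hrot : z * exp (π * I / q) = ‖z * exp (π * I / q)‖ * exp (I * ↑(φ + π / q)) := by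
    have hunit : ‖exp (π * I / q)‖ = 1 := by
      rw [show (π : ℂ) * I / q = ↑(π / q) * I by push_cast; ring, norm_exp_ofReal_mul_I]
    rw [norm_mul, hunit, mul_one]
    conv_lhs => rw [hzφ]
    rw [mul_assoc, ← Complex.exp_add]
    congr 2
    push_cast
    ring
  have hne : z * exp (π * I / q) ≠ 0 := mul_ne_zero hz (exp_ne_zero _)
  rw [argq, arg_eq_toIocMod_of_eq_norm_mul_exp hne hrot, intCast_floor_div_mul_toIocMod]
  congr 2
  field_simp

theorem intCast_argq_eq_of_eq_norm_mul_exp (q : ℕ) [NeZero q] (k : ℤ) {z : ℂ} (hz : z ≠ 0)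
    {θ : ℝ} (hθ₁ : -(π / q) < θ) (hθ₂ : θ < π / q)
    (hzrep : z = ‖z‖ * exp (I * ↑(2 * π * k / q + θ))) :
    ((argq q z : ℤ) : ZMod q) = k := by
  have hq : (0 : ℝ) < q := Nat.cast_pos.mpr (Nat.pos_of_neZero q)
  have hlo : -π < q * θ := by rwa [← neg_div, div_lt_iff₀' hq] at hθ₁
  have hhi : q * θ < π := by rwa [lt_div_iff₀' hq] at hθ₂
  have hsplit : q / (2 * π) * (2 * π * k / q + θ) + 1 / 2 = k + (q * θ / (2 * π) + 1 / 2) := by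
    field_simp
    ring
  have hfrac : ⌊q * θ / (2 * π) + 1 / 2⌋ = 0 := by
    rw [Int.floor_eq_zero_iff]
    constructor <;> field_simp <;> linarith
  rw [intCast_argq_eq_floor q hz hzrep, hsplit, Int.floor_intCast_add, hfrac, add_zero]

theorem intCast_argq_exp_two_pi_I_div_pow (q : ℕ) [NeZero q] (n : ℕ) :
    ((argq q (exp (2 * π * I / q) ^ n) : ℤ) : ZMod q) = n := by
  have hpow : exp (2 * π * I / q) ^ n = exp (I * ↑(2 * π * (n : ℤ) / q + 0)) := by
    rw [← Complex.exp_nat_mul]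
    push_cast
    ring_nf
  have hnorm : ‖exp (2 * π * I / q) ^ n‖ = 1 := by
    rw [hpow, mul_comm, norm_exp_ofReal_mul_I]
  have hπq : 0 < π / q := div_pos pi_pos (Nat.cast_pos.mpr (Nat.pos_of_neZero q))
  have h := intCast_argq_eq_of_eq_norm_mul_exp q n (hpow ▸ Complex.exp_ne_zero _)
    (neg_lt_zero.mpr hπq) hπq (by rw [hnorm, ofReal_one, one_mul, hpow])
  rwa [Int.cast_natCast] at h

theorem argq_recovers_exponent_general
    (q : ℕ) [NeZero q]
    (ω : ℂ) (hω : ω = Complex.exp (2 * (Real.pi : ℂ) * Complex.I / (q : ℂ)))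
    (k : ℕ) (z : ℂ) (hz : z ≠ 0) (θ : ℝ)
    (hθ₁ : -(Real.pi / q) < θ) (hθ₂ : θ < Real.pi / q)
    (hzrep : z = ((‖z‖ : ℝ) : ℂ) *
      Complex.exp (Complex.I * ((2 * (Real.pi : ℝ) * k / q + θ : ℝ) : ℂ))) :
    ((argq q z : ℤ) : ZMod q) = (k : ZMod q) ∧
    ∀ a : ZMod q, ((argq q (ω ^ a.val) : ℤ) : ZMod q) = a := by
  refine ⟨?_, fun a => ?_⟩
  · exact_mod_cast intCast_argq_eq_of_eq_norm_mul_exp q k hz hθ₁ hθ₂ (by exact_mod_cast hzrep)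
  · rw [hω, intCast_argq_exp_two_pi_I_div_pow, ZMod.natCast_val, ZMod.cast_id]

/-- If `z ≠ 0` can be written `z = |z|·e^{i(2πk/q + θ)}` with `0 ≤ k < q` and
`−π/q < θ < π/q`, then `arg_q(z) ≡ k (mod q)`. In particular `arg_q(ω^a) = a` for every
`a ∈ ZMod q`. -/
theorem argq_recovers_exponent
    (q : ℕ) [NeZero q] (hq : 2 ≤ q)
    (ω : ℂ) (hω : ω = Complex.exp (2 * (Real.pi : ℂ) * Complex.I / (q : ℂ)))
    (k : ℕ) (hk : k < q) (z : ℂ) (hz : z ≠ 0) (θ : ℝ)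
    (hθ₁ : -(Real.pi / q) < θ) (hθ₂ : θ < Real.pi / q)
    (hzrep : z = ((‖z‖ : ℝ) : ℂ) *
      Complex.exp (Complex.I * ((2 * (Real.pi : ℝ) * k / q + θ : ℝ) : ℂ))) :
    ((argq q z : ℤ) : ZMod q) = (k : ZMod q) ∧
    ∀ a : ZMod q, ((argq q (ω ^ a.val) : ℤ) : ZMod q) = a :=
  argq_recovers_exponent_general q ω hω k z hz θ hθ₁ hθ₂ hzrep
end

section
/- Let q ≥ 2, n ≥ 1, let k ∈ (ZMod q)^n and let F ∈ ℂ be nonzero. Define the noiseless singleton observations U_0 = F and U_p = F·ω^{⟨e_p, k⟩} = F·ω^{k_p} for p = 1,…,n, where e_p is the p-th standard basis vector (i.e., the offset matrix is D = I_n). Then for every p, arg_q(U_p / U_0) = k_p; consequently the index k and value F = U_0 of a noiseless singleton bin are recovered exactly. -/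
lemma argq_key (q : ℕ) (hq : 2 ≤ q) (v : ℕ) (hv : v < q) :
    ((argq q (Complex.exp (2 * (Real.pi : ℂ) * Complex.I / (q : ℂ)) ^ v) : ℤ) : ZMod q)
      = (v : ZMod q) := by
  have hq0 : (q : ℝ) ≠ 0 := by positivity
  have hπ : (0:ℝ) < Real.pi := Real.pi_pos
  set θ : ℝ := (2 * v + 1) * Real.pi / q with hθdef
  have hmul : Complex.exp (2 * (Real.pi : ℂ) * Complex.I / (q : ℂ)) ^ v *
      Complex.exp ((Real.pi : ℂ) * Complex.I / (q : ℂ)) = Complex.exp ((θ : ℂ) * Complex.I) := by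
    rw [← Complex.exp_nat_mul, ← Complex.exp_add]
    have hq0' : (q : ℂ) ≠ 0 := by exact_mod_cast Nat.cast_ne_zero.mpr (by omega)
    congr 1
    rw [hθdef]
    push_cast
    field_simp
  unfold argq
  rw [hmul]
  by_cases hcase : 2 * v + 1 ≤ q
  · have harg : (Complex.exp ((θ : ℂ) * Complex.I)).arg = θ := by
      rw [Complex.exp_mul_I]
      apply Complex.arg_cos_add_sin_mul_I
      constructor
      · have : (0:ℝ) < θ := by
          apply div_pos (by positivity) (by positivity)
        linarith
      · rw [hθdef, div_le_iff₀ (by positivity)]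
        have : (2 * (v:ℝ) + 1) ≤ q := by exact_mod_cast hcase
        nlinarith
    rw [harg]
    have hval : ((q : ℝ) / (2 * Real.pi)) * θ = (v : ℝ) + 1/2 := by
      rw [hθdef]; field_simp
    rw [hval]
    have : ⌊(v : ℝ) + 1/2⌋ = (v : ℤ) := by
      rw [Int.floor_eq_iff]
      constructor <;> push_cast <;> linarith
    rw [this]; push_cast; ring
  · -- θ' = θ - 2π
    have hshift : Complex.exp ((θ : ℂ) * Complex.I)
        = Complex.exp (((θ - 2 * Real.pi : ℝ) : ℂ) * Complex.I) := by
      rw [show ((θ : ℂ) * Complex.I) = ((θ - 2*Real.pi : ℝ) : ℂ) * Complex.I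
          + 2 * Real.pi * Complex.I by push_cast; ring, Complex.exp_add,
        Complex.exp_two_pi_mul_I, mul_one]
    have hlt : (q:ℝ) < 2 * v + 1 := by
      have : q < 2 * v + 1 := by omega
      exact_mod_cast this
    have harg : (Complex.exp ((θ : ℂ) * Complex.I)).arg = θ - 2 * Real.pi := by
      rw [hshift, Complex.exp_mul_I]
      apply Complex.arg_cos_add_sin_mul_I
      constructor
      · have : Real.pi < θ := by
          rw [hθdef, lt_div_iff₀ (by positivity)]
          nlinarith
        linarith
      · have hub : θ < 2 * Real.pi := by
          rw [hθdef, div_lt_iff₀ (by positivity)]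
          have : (2 * (v:ℝ) + 1) < 2 * q := by
            have : 2 * v + 1 < 2 * q := by omega
            exact_mod_cast this
          nlinarith
        linarith
    rw [harg]
    have hval : ((q : ℝ) / (2 * Real.pi)) * (θ - 2 * Real.pi) = (v : ℝ) + 1/2 - q := by
      rw [hθdef]; field_simp
    rw [hval]
    have : ⌊(v : ℝ) + 1/2 - q⌋ = (v : ℤ) - q := by
      rw [Int.floor_eq_iff]
      constructor <;> push_cast <;> linarith
    rw [this]
    push_cast [ZMod.natCast_self]
    ring

/-- Noiseless singleton identification with `D = I_n`: if `U_0 = F ≠ 0` and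
`U_p = F·ω^{k_p}` for `p = 1,…,n`, then `arg_q(U_p / U_0) = k_p` for every `p`, and the
value is recovered as `F = U_0`. -/
theorem noiseless_singleton_recovery
    (q n : ℕ) [NeZero q] (hq : 2 ≤ q) (hn : 1 ≤ n)
    (ω : ℂ) (hω : ω = Complex.exp (2 * (Real.pi : ℂ) * Complex.I / (q : ℂ)))
    (k : Fin n → ZMod q) (F : ℂ) (hF : F ≠ 0)
    (U₀ : ℂ) (hU₀ : U₀ = F)
    (U : Fin n → ℂ) (hU : ∀ p, U p = F * ω ^ (k p).val) :
    (∀ p, ((argq q (U p / U₀) : ℤ) : ZMod q) = k p) ∧ F = U₀ := by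
  refine ⟨fun p => ?_, hU₀.symm⟩
  have hdiv : U p / U₀ = ω ^ (k p).val := by
    rw [hU, hU₀, mul_comm, mul_div_assoc, div_self hF, mul_one]
  rw [hdiv, hω]
  have := argq_key q hq (k p).val (ZMod.val_lt (k p))
  rw [this, ZMod.natCast_val, ZMod.cast_id]
end

section
/- Let ν > 0, let z ∈ ℂ be nonzero, and let 0 < α ≤ π/2. If W is a complex Gaussian random variable CN(0, ν²), then ℙ( |arg((z + W)/z)| ≥ α ) ≤ exp( −|z|²·sin²(α) / (2ν²) ). -/
/-!
If `|arg (1 + ζ)| ≥ α ≥ 0`, rotating `1 + ζ` by `e^{∓iα}` pushes it into a closed half-plane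
through the origin, so `ζ` lies in one of two half-planes at distance `sin α` from `0`; for
`ζ = W / z` these are half-planes at distance `‖z‖ sin α` in the `W`-plane. The projection of
`W` on a direction is again a centred real Gaussian of variance `ν² / 2`, and for a real Gaussian
translating the density on `[μ, ∞)` by `c ≥ 0` multiplies it by at most `exp (-c² / 2v)`, which
gives `P(Y ≥ μ + c) ≤ exp (-c² / 2v) / 2`. The two half-planes together thus have probability at
most `exp (-‖z‖² sin² α / ν²)`.
-/

open MeasureTheory ProbabilityTheory Set
open scoped NNReal ENNReal

lemma gaussianReal_Ici_self (μ : ℝ) {v : ℝ≥0} (hv : v ≠ 0) :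
    gaussianReal μ v (Ici μ) = 2⁻¹ := by
  have := nullSingletonClass_gaussianReal (μ := μ) hv
  have hsymm : gaussianReal μ v (Iic μ) = gaussianReal μ v (Ici μ) := by
    have hreflect := gaussianReal_map_const_sub (μ := μ) (v := v) (2 * μ)
    rw [show 2 * μ - μ = μ by ring] at hreflect
    conv_lhs => rw [← hreflect, Measure.map_apply (by fun_prop) measurableSet_Iic]
    congr 1
    ext x
    simp only [mem_preimage, mem_Iic, mem_Ici]
    constructor <;> intro h <;> linarith
  have hsum : gaussianReal μ v (Iio μ) + gaussianReal μ v (Ici μ) = 1 := by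
    rw [← measure_union (Iio_disjoint_Ici le_rfl) measurableSet_Ici, Iio_union_Ici, measure_univ]
  rw [measure_congr Iio_ae_eq_Iic, hsymm, ← two_mul] at hsum
  exact ENNReal.eq_inv_of_mul_eq_one_left (by rwa [mul_comm])

lemma gaussianPDFReal_add_le {μ : ℝ} {v : ℝ≥0} {x c : ℝ} (hx : μ ≤ x) (hc : 0 ≤ c) :
    gaussianPDFReal μ v (x + c) ≤ Real.exp (-c ^ 2 / (2 * v)) * gaussianPDFReal μ v x := by
  rw [gaussianPDFReal, gaussianPDFReal, mul_left_comm, ← Real.exp_add]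
  gcongr
  rw [← add_div]
  gcongr ?_ / _
  nlinarith [mul_nonneg hc (sub_nonneg.2 hx)]

lemma gaussianReal_Ici_add_le (μ : ℝ) {v : ℝ≥0} (hv : v ≠ 0) {c : ℝ} (hc : 0 ≤ c) :
    gaussianReal μ v (Ici (μ + c)) ≤ ENNReal.ofReal (Real.exp (-c ^ 2 / (2 * v))) / 2 := by
  have hshift : (· + c) ⁻¹' Ici (μ + c) = Ici μ := by ext x; simp
  calc gaussianReal μ v (Ici (μ + c))
      = ∫⁻ x in Ici μ, gaussianPDF μ v (x + c) := by
        rw [gaussianReal_apply μ hv, ← hshift,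
          (measurePreserving_add_right volume c).setLIntegral_comp_preimage measurableSet_Ici
            (measurable_gaussianPDF μ v)]
    _ ≤ ∫⁻ x in Ici μ, ENNReal.ofReal (Real.exp (-c ^ 2 / (2 * v))) * gaussianPDF μ v x := by
        refine setLIntegral_mono' measurableSet_Ici fun x hx => ?_
        rw [gaussianPDF, gaussianPDF, ← ENNReal.ofReal_mul (Real.exp_nonneg _)]
        exact ENNReal.ofReal_le_ofReal (gaussianPDFReal_add_le hx hc)
    _ = ENNReal.ofReal (Real.exp (-c ^ 2 / (2 * v))) / 2 := by
        rw [lintegral_const_mul _ (measurable_gaussianPDF μ v), ← gaussianReal_apply μ hv,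
          gaussianReal_Ici_self μ hv]
        exact (div_eq_mul_inv _ _).symm

lemma gaussianReal_prod_map_linear (m₁ m₂ : ℝ) (v₁ v₂ : ℝ≥0) (a b : ℝ) :
    ((gaussianReal m₁ v₁).prod (gaussianReal m₂ v₂)).map (fun p => a * p.1 + b * p.2)
      = gaussianReal (a * m₁ + b * m₂)
          (.mk (a ^ 2) (sq_nonneg _) * v₁ + .mk (b ^ 2) (sq_nonneg _) * v₂) := by
  have hcomp : (fun p : ℝ × ℝ => a * p.1 + b * p.2)
      = (fun p : ℝ × ℝ => p.1 + p.2) ∘ Prod.map (a * ·) (b * ·) := rfl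
  rw [hcomp, ← Measure.map_map (by fun_prop) (by fun_prop),
    ← Measure.map_prod_map _ _ (by fun_prop) (by fun_prop), gaussianReal_map_const_mul,
    gaussianReal_map_const_mul, ← gaussianReal_conv_gaussianReal]
  rfl

lemma gaussianReal_prod_setOf_le_im_mul_le {v : ℝ≥0} (hv : v ≠ 0) {u : ℂ} (hu : u ≠ 0) {c : ℝ}
    (hc : 0 ≤ c) :
    ((gaussianReal 0 v).prod (gaussianReal 0 v))
        {p : ℝ × ℝ | c ≤ (((p.1 : ℂ) + (p.2 : ℂ) * Complex.I) * u).im}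
      ≤ ENNReal.ofReal (Real.exp (-c ^ 2 / (2 * (‖u‖ ^ 2 * v)))) / 2 := by
  set V : ℝ≥0 := .mk (u.im ^ 2) (sq_nonneg _) * v + .mk (u.re ^ 2) (sq_nonneg _) * v
  have hV : (V : ℝ) = ‖u‖ ^ 2 * v := by
    rw [NNReal.coe_add, NNReal.coe_mul, NNReal.coe_mul, NNReal.coe_mk, NNReal.coe_mk,
      Complex.sq_norm, Complex.normSq_apply]
    ring
  have hV0 : V ≠ 0 := by
    rw [← NNReal.coe_ne_zero, hV]
    positivity
  have hset : {p : ℝ × ℝ | c ≤ (((p.1 : ℂ) + (p.2 : ℂ) * Complex.I) * u).im}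
      = (fun p : ℝ × ℝ => u.im * p.1 + u.re * p.2) ⁻¹' Ici (0 + c) := by
    ext p
    simp only [mem_ofPred_eq, mem_preimage, mem_Ici, zero_add, Complex.mul_im, Complex.add_re,
      Complex.add_im, Complex.ofReal_re, Complex.ofReal_im, Complex.mul_re, Complex.I_re,
      Complex.I_im]
    ring_nf
  rw [hset, ← Measure.map_apply (by fun_prop) measurableSet_Ici, gaussianReal_prod_map_linear,
    mul_zero, mul_zero, add_zero, ← hV]
  exact gaussianReal_Ici_add_le 0 hV0 hc

lemma im_mul_exp_mul_I (q : ℂ) (θ : ℝ) :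
    (q * Complex.exp (θ * Complex.I)).im = ‖q‖ * Real.sin (q.arg + θ) := by
  conv_lhs => rw [← Complex.norm_mul_exp_arg_mul_I q]
  rw [mul_assoc, ← Complex.exp_add, ← add_mul, ← Complex.ofReal_add,
    Complex.im_ofReal_mul, Complex.exp_ofReal_mul_I_im]

open Real in
lemma sin_le_im_or_of_le_abs_arg_one_add {α : ℝ} (hα₀ : 0 ≤ α) {ζ : ℂ}
    (h : α ≤ |(1 + ζ).arg|) :
    sin α ≤ (ζ * Complex.exp (↑(-α) * Complex.I)).im
      ∨ sin α ≤ (ζ * -Complex.exp (↑α * Complex.I)).im := by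
  have hexpand (θ : ℝ) : ((1 + ζ) * Complex.exp (θ * Complex.I)).im
      = sin θ + (ζ * Complex.exp (θ * Complex.I)).im := by
    rw [add_mul, one_mul, Complex.add_im, Complex.exp_ofReal_mul_I_im]
  rcases le_abs.mp h with harg | harg
  · left
    have hrotated := hexpand (-α)
    rw [im_mul_exp_mul_I, sin_neg] at hrotated
    have : 0 ≤ sin ((1 + ζ).arg + -α) :=
      sin_nonneg_of_nonneg_of_le_pi (by linarith) (by linarith [Complex.arg_le_pi (1 + ζ)])
    nlinarith [norm_nonneg (1 + ζ)]
  · right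
    have hrotated := hexpand α
    rw [im_mul_exp_mul_I] at hrotated
    have : sin ((1 + ζ).arg + α) ≤ 0 :=
      sin_nonpos_of_nonpos_of_neg_pi_le (by linarith) (by linarith [Complex.neg_pi_lt_arg (1 + ζ)])
    rw [mul_neg, Complex.neg_im]
    nlinarith [norm_nonneg (1 + ζ)]

/-- If `W ~ CN(0, ν²)` (modeled as `W = X + iY` with `X, Y` i.i.d.
`N(0, ν²/2)`), `z ≠ 0` and `0 < α ≤ π/2`, then
`ℙ(|arg((z + W)/z)| ≥ α) ≤ exp(−|z|²·sin²α/(2ν²))`. -/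
theorem gaussian_arg_perturbation_tail
    (ν : ℝ) (hν : 0 < ν) (z : ℂ) (hz : z ≠ 0)
    (α : ℝ) (hα₁ : 0 < α) (hα₂ : α ≤ Real.pi / 2) :
    ((gaussianReal 0 ((ν ^ 2 / 2).toNNReal)).prod (gaussianReal 0 ((ν ^ 2 / 2).toNNReal)))
        {p : ℝ × ℝ | α ≤ |((z + ((p.1 : ℂ) + (p.2 : ℂ) * Complex.I)) / z).arg|}
      ≤ ENNReal.ofReal
          (Real.exp (-(‖z‖ ^ 2 * Real.sin α ^ 2) / (2 * ν ^ 2))) := by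
  have hv : (ν ^ 2 / 2).toNNReal ≠ 0 := (Real.toNNReal_pos.2 (by positivity)).ne'
  have hsin : 0 ≤ Real.sin α :=
    Real.sin_nonneg_of_nonneg_of_le_pi hα₁.le (by linarith [Real.pi_pos])
  set u₁ := Complex.exp (↑(-α) * Complex.I) / z
  set u₂ := -Complex.exp (↑α * Complex.I) / z
  have hu : ‖u₁‖ = ‖z‖⁻¹ ∧ ‖u₂‖ = ‖z‖⁻¹ := by
    simp only [u₁, u₂, norm_div, norm_neg, Complex.norm_exp_ofReal_mul_I, one_div, and_self]
  have hsub : {p : ℝ × ℝ | α ≤ |((z + ((p.1 : ℂ) + (p.2 : ℂ) * Complex.I)) / z).arg|}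
      ⊆ {p | Real.sin α ≤ (((p.1 : ℂ) + (p.2 : ℂ) * Complex.I) * u₁).im}
        ∪ {p | Real.sin α ≤ (((p.1 : ℂ) + (p.2 : ℂ) * Complex.I) * u₂).im} := by
    intro p (hp : α ≤ _)
    rw [add_div, div_self hz] at hp
    have := sin_le_im_or_of_le_abs_arg_one_add hα₁.le hp
    simpa only [u₁, u₂, mul_div_assoc', div_mul_eq_mul_div, mem_union, mem_ofPred_eq] using this
  calc _ ≤ _ := (measure_mono hsub).trans (measure_union_le _ _)
    _ ≤ _ := add_le_add (gaussianReal_prod_setOf_le_im_mul_le hv (by simp [u₁, hz]) hsin)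
        (gaussianReal_prod_setOf_le_im_mul_le hv (by simp [u₂, hz]) hsin)
    _ = _ := by rw [hu.1, hu.2, ENNReal.add_halves]
    _ ≤ _ := by
        refine ENNReal.ofReal_le_ofReal (Real.exp_le_exp.2 ?_)
        have hzpos : 0 < ‖z‖ := norm_pos_iff.2 hz
        rw [Real.coe_toNNReal _ (by positivity),
          show 2 * (‖z‖⁻¹ ^ 2 * (ν ^ 2 / 2)) = ν ^ 2 / ‖z‖ ^ 2 by field_simp, div_div_eq_mul_div,
          neg_mul, mul_comm, neg_div, neg_div, neg_le_neg_iff]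
        gcongr
        linarith [sq_nonneg ν]
end

section
/- Let q ≥ 2, ν > 0, let z ∈ ℂ be nonzero, and let s ∈ ZMod q. If W and W' are independent complex Gaussian random variables CN(0, ν²), then the probability that arg_q( (z·ω^s + W') / (z + W) ) ≠ s is at most 2·exp( −|z|²·sin²(π/(2q)) / (2ν²) ). (This is the per-offset symbol error bound of Proposition 2: with |z|² = ρ², ν² = σ²/B, B = ηS and SNR = Sρ²/σ², the bound reads 2·exp(−(ζ/2)·SNR) with ζ = η·sin²(π/(2q)).) -/
/-!
Put `z' = z ω^s`. The received ratio is `ω^s · (1 + W'/z') / (1 + W/z)`, and because the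
shift by `e^{iπ/q}` centres the decision cells of `arg_q` on the powers of `ω`, it is decoded
as `s` as soon as both `1 + W/z` and `1 + W'/z'` lie in the open sector `|arg| < α := π/(2q)`.
A point `1 + u` leaves that sector only across one of its two boundary lines, i.e. only if
`Im (u e^{-iα}) ≥ sin α` or `Im (-u e^{iα}) ≥ sin α`. Each of these four events is a
half-plane for a sub-Gaussian linear form of the noise, of probability at most
`E = exp(-|z|² sin² α / ν²)` by the Chernoff bound. Finally `min(1, 4E) ≤ 2√E`.
-/

open MeasureTheory ProbabilityTheory

open Complex
open scoped Real NNReal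

lemma hasSubgaussianMGF_id_gaussianReal (v : ℝ≥0) :
    HasSubgaussianMGF id v (gaussianReal 0 v) where
  integrable_exp_mul := integrable_exp_mul_gaussianReal
  mgf_le t := by simp [mgf_id_gaussianReal]

lemma prod_gaussianReal_measureReal_linear_ge_le (v : ℝ≥0) (a b : ℝ) {t : ℝ} (ht : 0 ≤ t) :
    ((gaussianReal 0 v).prod (gaussianReal 0 v)).real {p | t ≤ a * p.1 + b * p.2}
      ≤ Real.exp (-t ^ 2 / (2 * ((a ^ 2 + b ^ 2) * v))) := by
  set μ := gaussianReal 0 v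
  have hX : HasSubgaussianMGF (fun p : ℝ × ℝ ↦ a * p.1) _ (μ.prod μ) :=
    .of_map measurable_fst.aemeasurable
      (by rw [measurePreserving_fst.map_eq]; exact (hasSubgaussianMGF_id_gaussianReal v).const_mul a)
  have hY : HasSubgaussianMGF (fun p : ℝ × ℝ ↦ b * p.2) _ (μ.prod μ) :=
    .of_map measurable_snd.aemeasurable
      (by rw [measurePreserving_snd.map_eq]; exact (hasSubgaussianMGF_id_gaussianReal v).const_mul b)
  have hXY := hX.add_of_indepFun hY
    (indepFun_prod₀ (measurable_const_mul a).aemeasurable (measurable_const_mul b).aemeasurable)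
  convert hXY.measure_ge_le ht using 3
  change _ = 2 * (a ^ 2 * v + b ^ 2 * v)
  ring

lemma prod_gaussianReal_measureReal_im_mul_ge_le (v : ℝ≥0) (c : ℂ) {t : ℝ} (ht : 0 ≤ t) :
    ((gaussianReal 0 v).prod (gaussianReal 0 v)).real
        {p : ℝ × ℝ | t ≤ ((p.1 + p.2 * I) * c).im}
      ≤ Real.exp (-t ^ 2 / (2 * (‖c‖ ^ 2 * v))) := by
  have him : ∀ p : ℝ × ℝ, ((p.1 + p.2 * I) * c).im = c.im * p.1 + c.re * p.2 := by
    intro p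
    simp only [mul_im, mul_re, add_re, add_im, ofReal_re, ofReal_im, I_re, I_im]
    ring
  have hnorm : ‖c‖ ^ 2 = c.im ^ 2 + c.re ^ 2 := by
    rw [Complex.sq_norm, normSq_apply]; ring
  simp only [him, hnorm]
  exact prod_gaussianReal_measureReal_linear_ge_le v _ _ ht

lemma im_mul_exp_mul_I_s9 (v : ℂ) (β : ℝ) :
    (v * exp (β * I)).im = ‖v‖ * Real.sin (arg v + β) := by
  conv_lhs => rw [← norm_mul_exp_arg_mul_I v]
  rw [mul_assoc, ← exp_add, ← add_mul, ← ofReal_add, im_ofReal_mul, exp_ofReal_mul_I_im]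

def InSector (α : ℝ) (u : ℂ) : Prop := u ≠ 0 ∧ |arg u| < α

lemma inSector_of_im_mul_exp {v : ℂ} {α : ℝ} (hα : 0 ≤ α)
    (h₁ : (v * exp (-α * I)).im < 0) (h₂ : 0 < (v * exp (α * I)).im) : InSector α v := by
  have hv : v ≠ 0 := by rintro rfl; simp at h₂
  refine ⟨hv, abs_lt.2 ⟨?_, ?_⟩⟩
  · by_contra! h
    rw [im_mul_exp_mul_I_s9] at h₂
    have : Real.sin (arg v + α) ≤ 0 :=
      Real.sin_nonpos_of_nonpos_of_neg_pi_le (by linarith) (by linarith [neg_pi_lt_arg v])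
    nlinarith [norm_nonneg v]
  · by_contra! h
    rw [← ofReal_neg, im_mul_exp_mul_I_s9] at h₁
    have : 0 ≤ Real.sin (arg v + -α) :=
      Real.sin_nonneg_of_nonneg_of_le_pi (by linarith) (by linarith [arg_le_pi v])
    nlinarith [norm_nonneg v]

lemma inSector_one_add_of_im_mul_lt {u : ℂ} {α : ℝ} (hα : 0 ≤ α)
    (h₁ : (u * exp (-α * I)).im < Real.sin α) (h₂ : (u * -exp (α * I)).im < Real.sin α) :
    InSector α (1 + u) := by
  refine inSector_of_im_mul_exp hα ?_ ?_
  · rw [← ofReal_neg] at h₁ ⊢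
    rw [add_mul, one_mul, add_im, exp_ofReal_mul_I_im, Real.sin_neg]
    linarith
  · rw [mul_neg, neg_im] at h₂
    rw [add_mul, one_mul, add_im, exp_ofReal_mul_I_im]
    linarith

lemma prod_gaussianReal_measureReal_not_inSector_le (v : ℝ≥0) (y : ℂ) {α : ℝ}
    (hα₀ : 0 ≤ α) (hαπ : α ≤ π) :
    ((gaussianReal 0 v).prod (gaussianReal 0 v)).real
        {p : ℝ × ℝ | ¬ InSector α (1 + (p.1 + p.2 * I) / y)}
      ≤ 2 * Real.exp (-(‖y‖ ^ 2 * Real.sin α ^ 2) / (2 * v)) := by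
  have htail : ∀ e : ℂ, ‖e‖ = 1 →
      ((gaussianReal 0 v).prod (gaussianReal 0 v)).real
        {p : ℝ × ℝ | Real.sin α ≤ ((p.1 + p.2 * I) / y * e).im}
        ≤ Real.exp (-(‖y‖ ^ 2 * Real.sin α ^ 2) / (2 * v)) := fun e he ↦ by
    simp_rw [div_mul_eq_mul_div, mul_div_assoc]
    convert prod_gaussianReal_measureReal_im_mul_ge_le v (e / y)
      (Real.sin_nonneg_of_nonneg_of_le_pi hα₀ hαπ) using 2
    rw [norm_div, he, one_div]
    simp only [div_eq_mul_inv, inv_pow, mul_inv, inv_inv]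
    ring
  have hsub : {p : ℝ × ℝ | ¬ InSector α (1 + (p.1 + p.2 * I) / y)}
      ⊆ {p : ℝ × ℝ | Real.sin α ≤ ((p.1 + p.2 * I) / y * exp (-α * I)).im}
        ∪ {p : ℝ × ℝ | Real.sin α ≤ ((p.1 + p.2 * I) / y * -exp (α * I)).im} := by
    intro p hp
    by_contra! h
    simp only [Set.mem_union, Set.mem_ofPred_eq, not_or, not_le] at h
    exact hp (inSector_one_add_of_im_mul_lt hα₀ h.1 h.2)
  calc _ ≤ _ := measureReal_mono hsub
    _ ≤ _ := measureReal_union_le _ _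
    _ ≤ _ := by
      rw [two_mul]
      exact add_le_add (htail _ (by rw [← ofReal_neg, norm_exp_ofReal_mul_I]))
        (htail _ (by rw [norm_neg, norm_exp_ofReal_mul_I]))

lemma exists_arg_ofReal_mul_exp_mul_I_eq (θ : ℝ) {r : ℝ} (hr : 0 < r) :
    ∃ m : ℤ, arg (r * exp (θ * I)) = θ + 2 * π * m :=
  ⟨⌊(π - θ) / (2 * π)⌋, by
    rw [exp_mul_I]
    linarith [arg_mul_cos_add_sin_mul_I_sub hr θ]⟩

lemma argq_real_mul_exp (q : ℕ) [NeZero q] {r : ℝ} (hr : 0 < r) (k : ℕ) {δ : ℝ}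
    (hδ : |δ| < π / q) :
    ((argq q (r * exp ((2 * π * k / q + δ : ℝ) * I)) : ℤ) : ZMod q) = k := by
  have hq : (0 : ℝ) < q := by simp [Nat.pos_of_neZero]
  have hshift : (π : ℂ) * I / q = (π / q : ℝ) * I := by push_cast; ring
  obtain ⟨m, hm⟩ := exists_arg_ofReal_mul_exp_mul_I_eq (2 * π * k / q + δ + π / q) hr
  have hfrac : 0 ≤ q * δ / (2 * π) + 1 / 2 ∧ q * δ / (2 * π) + 1 / 2 < 1 := by
    have hqδ : |q * δ| < π := by rw [abs_mul, Nat.abs_cast]; exact (lt_div_iff₀' hq).1 hδ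
    obtain ⟨hlow, hhigh⟩ := abs_lt.1 hqδ
    rw [show q * δ / (2 * π) + 1 / 2 = (q * δ + π) / (2 * π) by field_simp]
    exact ⟨div_nonneg (by linarith) (by positivity), (div_lt_one (by positivity)).2 (by linarith)⟩
  have hfloor : ⌊(q : ℝ) / (2 * π) * (2 * π * k / q + δ + π / q + 2 * π * m)⌋ = k + q * m := by
    rw [show (q : ℝ) / (2 * π) * (2 * π * k / q + δ + π / q + 2 * π * m)
        = ((k + q * m : ℤ) : ℝ) + (q * δ / (2 * π) + 1 / 2) by push_cast; field_simp; ring,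
      Int.floor_intCast_add, Int.floor_eq_zero_iff.2 hfrac, add_zero]
  rw [argq, hshift, mul_assoc, ← exp_add, ← add_mul, ← ofReal_add, hm, hfloor]
  simp

lemma div_eq_norm_div_mul_exp_arg_sub (a b : ℂ) :
    a / b = (‖a‖ / ‖b‖ : ℝ) * exp ((arg a - arg b : ℝ) * I) := by
  conv_lhs => rw [← norm_mul_exp_arg_mul_I a, ← norm_mul_exp_arg_mul_I b]
  rw [mul_div_mul_comm, ← exp_sub, ofReal_div, ofReal_sub, sub_mul]

lemma argq_exp_pow_mul_div (q : ℕ) [NeZero q] (k : ℕ) {A B : ℂ} (hA : A ≠ 0) (hB : B ≠ 0)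
    (h : |arg A| + |arg B| < π / q) :
    ((argq q (exp (2 * π * I / q) ^ k * (A / B)) : ℤ) : ZMod q) = k := by
  have hpolar : exp (2 * π * I / q) ^ k * (A / B)
      = (‖A‖ / ‖B‖ : ℝ) * exp ((2 * π * k / q + (arg A - arg B) : ℝ) * I) := by
    rw [div_eq_norm_div_mul_exp_arg_sub A B, ← exp_nat_mul, mul_left_comm, ← exp_add]
    push_cast
    ring_nf
  rw [hpolar]
  exact argq_real_mul_exp q (div_pos (norm_pos_iff.2 hA) (norm_pos_iff.2 hB)) k
    ((abs_sub _ _).trans_lt h)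

lemma argq_div_eq_of_inSector (q : ℕ) [NeZero q] (s : ZMod q) {z w w' : ℂ} (hz : z ≠ 0)
    (hw : InSector (π / (2 * q)) (1 + w / z))
    (hw' : InSector (π / (2 * q)) (1 + w' / (z * exp (2 * π * I / q) ^ s.val))) :
    ((argq q ((z * exp (2 * π * I / q) ^ s.val + w') / (z + w)) : ℤ) : ZMod q) = s := by
  set ω := exp (2 * π * I / q)
  have hωs : ω ^ s.val ≠ 0 := pow_ne_zero _ (exp_ne_zero _)
  have hratio : (z * ω ^ s.val + w') / (z + w)
      = ω ^ s.val * ((1 + w' / (z * ω ^ s.val)) / (1 + w / z)) := by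
    field_simp
  rw [hratio, argq_exp_pow_mul_div q s.val hw'.1 hw.1, ZMod.natCast_zmod_val]
  calc |arg (1 + w' / (z * ω ^ s.val))| + |arg (1 + w / z)|
      < π / (2 * q) + π / (2 * q) := add_lt_add hw'.2 hw.2
    _ = π / q := by field_simp; ring

lemma measure_le_ofReal_two_mul_of_measureReal_le {Ω : Type*} {_ : MeasurableSpace Ω}
    {μ : Measure Ω} [IsProbabilityMeasure μ] {S : Set Ω} {x : ℝ} (hx : 0 ≤ x)
    (h : μ.real S ≤ 4 * x ^ 2) : μ S ≤ ENNReal.ofReal (2 * x) := by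
  rw [← ofReal_measureReal]
  refine ENNReal.ofReal_le_ofReal ?_
  rcases le_total 1 (2 * x) with hx₁ | hx₁
  · linarith [measureReal_le_one (μ := μ) (s := S)]
  · nlinarith

theorem symbol_error_probability_bound_general
    (q : ℕ) [NeZero q]
    (ω : ℂ) (hω : ω = Complex.exp (2 * (Real.pi : ℂ) * Complex.I / (q : ℂ)))
    (ν : ℝ) (z : ℂ) (hz : z ≠ 0) (s : ZMod q) :
    (((gaussianReal 0 ((ν ^ 2 / 2).toNNReal)).prod
        (gaussianReal 0 ((ν ^ 2 / 2).toNNReal))).prod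
      ((gaussianReal 0 ((ν ^ 2 / 2).toNNReal)).prod
        (gaussianReal 0 ((ν ^ 2 / 2).toNNReal))))
        {p : (ℝ × ℝ) × (ℝ × ℝ) |
          ((argq q ((z * ω ^ s.val + ((p.2.1 : ℂ) + (p.2.2 : ℂ) * Complex.I)) /
              (z + ((p.1.1 : ℂ) + (p.1.2 : ℂ) * Complex.I))) : ℤ) : ZMod q) ≠ s}
      ≤ ENNReal.ofReal
          (2 * Real.exp (-(‖z‖ ^ 2 * Real.sin (Real.pi / (2 * q)) ^ 2)
            / (2 * ν ^ 2))) := by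
  subst hω
  set μ := (gaussianReal 0 (ν ^ 2 / 2).toNNReal).prod (gaussianReal 0 (ν ^ 2 / 2).toNNReal)
  set α := π / (2 * q)
  set z' := z * exp (2 * π * I / q) ^ s.val
  set x := Real.exp (-(‖z‖ ^ 2 * Real.sin α ^ 2) / (2 * ν ^ 2))
  have hq : (1 : ℝ) ≤ q := by exact_mod_cast NeZero.one_le
  have hα : 0 ≤ α ∧ α ≤ π := ⟨by positivity, div_le_self Real.pi_pos.le (by linarith)⟩
  have hexit : ∀ y : ℂ, ‖y‖ = ‖z‖ →
      μ.real {p : ℝ × ℝ | ¬ InSector α (1 + (p.1 + p.2 * I) / y)} ≤ 2 * x ^ 2 := by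
    intro y hy
    convert prod_gaussianReal_measureReal_not_inSector_le _ y hα.1 hα.2 using 2
    rw [hy, Real.coe_toNNReal _ (by positivity), ← Real.exp_nat_mul]
    ring_nf
  have hsub : {p : (ℝ × ℝ) × (ℝ × ℝ) |
      ((argq q ((z' + (p.2.1 + p.2.2 * I)) / (z + (p.1.1 + p.1.2 * I))) : ℤ) : ZMod q) ≠ s}
      ⊆ {p : ℝ × ℝ | ¬ InSector α (1 + (p.1 + p.2 * I) / z)} ×ˢ Set.univ
        ∪ Set.univ ×ˢ {p : ℝ × ℝ | ¬ InSector α (1 + (p.1 + p.2 * I) / z')} := by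
    intro p hp
    by_contra! h
    simp only [Set.mem_union, Set.mem_prod, Set.mem_univ, and_true, true_and, not_or,
      Set.mem_ofPred_eq, not_not] at h
    exact hp (argq_div_eq_of_inSector q s hz h.1 h.2)
  refine measure_le_ofReal_two_mul_of_measureReal_le (Real.exp_nonneg _) ?_
  calc _ ≤ _ := measureReal_mono hsub
    _ ≤ _ := measureReal_union_le _ _
    _ ≤ 2 * x ^ 2 + 2 * x ^ 2 := by
      rw [measureReal_prod_prod, measureReal_prod_prod, probReal_univ, mul_one, one_mul]
      exact add_le_add (hexit z rfl) (hexit z' (by simp [z', Complex.norm_exp]))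
    _ = 4 * x ^ 2 := by ring

/-- per-offset symbol error bound of Proposition 2: if `W, W'` are
independent `CN(0, ν²)` and `z ≠ 0`, then
`ℙ(arg_q((z·ω^s + W')/(z + W)) ≠ s) ≤ 2·exp(−|z|²·sin²(π/(2q))/(2ν²))`. -/
theorem symbol_error_probability_bound
    (q : ℕ) [NeZero q] (hq : 2 ≤ q)
    (ω : ℂ) (hω : ω = Complex.exp (2 * (Real.pi : ℂ) * Complex.I / (q : ℂ)))
    (ν : ℝ) (hν : 0 < ν) (z : ℂ) (hz : z ≠ 0) (s : ZMod q) :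
    (((gaussianReal 0 ((ν ^ 2 / 2).toNNReal)).prod
        (gaussianReal 0 ((ν ^ 2 / 2).toNNReal))).prod
      ((gaussianReal 0 ((ν ^ 2 / 2).toNNReal)).prod
        (gaussianReal 0 ((ν ^ 2 / 2).toNNReal))))
        {p : (ℝ × ℝ) × (ℝ × ℝ) |
          ((argq q ((z * ω ^ s.val + ((p.2.1 : ℂ) + (p.2.2 : ℂ) * Complex.I)) /
              (z + ((p.1.1 : ℂ) + (p.1.2 : ℂ) * Complex.I))) : ℤ) : ZMod q) ≠ s}
      ≤ ENNReal.ofReal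
          (2 * Real.exp (-(‖z‖ ^ 2 * Real.sin (Real.pi / (2 * q)) ^ 2)
            / (2 * ν ^ 2))) :=
  symbol_error_probability_bound_general q ω hω ν z hz s
end

section
/- Let q ≥ 2, n ≥ 1, P ≥ 1, and let a ∈ (ZMod q)^n be nonzero. Draw d_1, …, d_P independently and uniformly at random from (ZMod q)^n (uniform measure on the finite set ((ZMod q)^n)^P). Then for every μ₀ > 0, ℙ( | Σ_{p=1}^P ω^{⟨d_p, a⟩} | ≥ P·μ₀ ) ≤ 4·exp( −μ₀²·P / 8 ). -/
/-!
The map `v ↦ ω ^ ⟨v, a⟩` is a nontrivial additive character of `(ZMod q)ⁿ`, so its values have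
mean zero and modulus one. Each of `±Re`, `±Im` of it is therefore a mean-zero variable bounded
by one, and Hoeffding's inequality (proved by counting: exponential Markov, factorisation of the
moment generating function over the `P` coordinates, and `cosh l ≤ exp (l² / 2)`) bounds the
tail of each sum by `exp (-μ₀² P / 8)` at threshold `P μ₀ / 2`. Since `‖z‖ ≤ |Re z| + |Im z|`,
a sum of norm at least `P μ₀` lies in one of these four tails.
-/

open Finset

lemma exp_mul_le_cosh_add_mul_sinh {l g : ℝ} (hg : |g| ≤ 1) :
    Real.exp (l * g) ≤ Real.cosh l + g * Real.sinh l := by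
  obtain ⟨hg₁, hg₂⟩ := abs_le.mp hg
  -- `l * g` is the convex combination of `-l` and `l` with weights `(1 - g) / 2` and `(1 + g) / 2`
  have h := convexOn_exp.2 (Set.mem_univ (-l)) (Set.mem_univ l)
    (by linarith : (0 : ℝ) ≤ (1 - g) / 2) (by linarith : (0 : ℝ) ≤ (1 + g) / 2) (by ring)
  simp only [smul_eq_mul] at h
  calc Real.exp (l * g) = Real.exp ((1 - g) / 2 * -l + (1 + g) / 2 * l) := by ring_nf
    _ ≤ (1 - g) / 2 * Real.exp (-l) + (1 + g) / 2 * Real.exp l := h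
    _ = Real.cosh l + g * Real.sinh l := by rw [Real.cosh_eq, Real.sinh_eq]; ring

section Hoeffding

variable {α : Type*} [Fintype α] {G : α → ℝ}

lemma sum_exp_mul_le_card_mul_exp (hG : ∀ x, |G x| ≤ 1) (hG₀ : ∑ x, G x = 0) (l : ℝ) :
    ∑ x, Real.exp (l * G x) ≤ Fintype.card α * Real.exp (l ^ 2 / 2) :=
  calc ∑ x, Real.exp (l * G x)
      ≤ ∑ x, (Real.cosh l + G x * Real.sinh l) :=
        sum_le_sum fun x _ => exp_mul_le_cosh_add_mul_sinh (hG x)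
    _ = Fintype.card α * Real.cosh l := by
        rw [sum_add_distrib, ← sum_mul, hG₀, sum_const, card_univ, nsmul_eq_mul]; ring
    _ ≤ Fintype.card α * Real.exp (l ^ 2 / 2) := by gcongr; exact Real.cosh_le_exp_half_sq l

lemma sum_exp_mul_sum_eq_pow (l : ℝ) (P : ℕ) :
    ∑ d : Fin P → α, Real.exp (l * ∑ p, G (d p)) = (∑ x, Real.exp (l * G x)) ^ P := by
  simp only [Fintype.sum_pow, mul_sum, Real.exp_sum]

lemma card_filter_mul_exp_le_sum_exp {β : Type*} [Fintype β] (F : β → ℝ) {l : ℝ} (hl : 0 ≤ l)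
    (t : ℝ) : #{d | t ≤ F d} * Real.exp (l * t) ≤ ∑ d, Real.exp (l * F d) :=
  calc #{d | t ≤ F d} * Real.exp (l * t)
      = ∑ d with t ≤ F d, Real.exp (l * t) := by rw [sum_const, nsmul_eq_mul]
    _ ≤ ∑ d with t ≤ F d, Real.exp (l * F d) :=
        sum_le_sum fun d hd => by gcongr; exact (mem_filter.mp hd).2
    _ ≤ ∑ d, Real.exp (l * F d) :=
        sum_le_sum_of_subset_of_nonneg (filter_subset _ _) fun _ _ _ => (Real.exp_pos _).le

lemma card_filter_sum_ge_le (hG : ∀ x, |G x| ≤ 1) (hG₀ : ∑ x, G x = 0) (P : ℕ) {s : ℝ}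
    (hs : 0 ≤ s) :
    (#{d : Fin P → α | P * s ≤ ∑ p, G (d p)} : ℝ)
      ≤ Real.exp (-(s ^ 2 * P / 2)) * Fintype.card α ^ P := by
  have hmgf := calc
      (#{d : Fin P → α | P * s ≤ ∑ p, G (d p)} : ℝ) * Real.exp (s * (P * s))
        ≤ ∑ d : Fin P → α, Real.exp (s * ∑ p, G (d p)) :=
          card_filter_mul_exp_le_sum_exp _ hs _
      _ = (∑ x, Real.exp (s * G x)) ^ P := sum_exp_mul_sum_eq_pow s P
      _ ≤ (Fintype.card α * Real.exp (s ^ 2 / 2)) ^ P := by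
          gcongr
          exact sum_exp_mul_le_card_mul_exp hG hG₀ s
  rw [← le_div_iff₀ (Real.exp_pos _)] at hmgf
  refine hmgf.trans_eq ?_
  rw [mul_pow, ← Real.exp_nat_mul, div_eq_mul_inv, ← Real.exp_neg, mul_assoc, ← Real.exp_add,
    mul_comm]
  ring_nf

end Hoeffding

lemma Complex.exists_norm_le_two_mul_re_I_pow_mul (z : ℂ) :
    ∃ k : Fin 4, ‖z‖ ≤ 2 * (Complex.I ^ (k : ℕ) * z).re := by
  have h := z.norm_le_abs_re_add_abs_im
  have hI : ∀ k : Fin 4, (Complex.I ^ (k : ℕ) * z).re = ![z.re, -z.im, -z.re, z.im] k := by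
    intro k; fin_cases k <;> simp [pow_succ]
  simp only [hI]
  rcases le_total |z.im| |z.re| with hle | hle
  · rcases abs_cases z.re with ⟨hre, -⟩ | ⟨hre, -⟩
    · exact ⟨0, by simp; linarith⟩
    · exact ⟨2, by simp; linarith⟩
  · rcases abs_cases z.im with ⟨him, -⟩ | ⟨him, -⟩
    · exact ⟨3, by simp; linarith⟩
    · exact ⟨1, by simp; linarith⟩

section ComplexHoeffding

variable {α : Type*} [Fintype α] {χ : α → ℂ}

lemma card_filter_norm_sum_ge_le (hχ : ∀ x, ‖χ x‖ ≤ 1) (hχ₀ : ∑ x, χ x = 0) (P : ℕ) {μ : ℝ}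
    (hμ : 0 ≤ μ) :
    (#{d : Fin P → α | P * μ ≤ ‖∑ p, χ (d p)‖} : ℝ)
      ≤ 4 * Real.exp (-(μ ^ 2) * P / 8) * Fintype.card α ^ P := by
  classical
  set G : Fin 4 → α → ℝ := fun k x => (Complex.I ^ (k : ℕ) * χ x).re
  have hG : ∀ k x, |G k x| ≤ 1 := fun k x =>
    (Complex.abs_re_le_norm _).trans (by simpa using hχ x)
  have hG₀ : ∀ k, ∑ x, G k x = 0 := fun k => by
    simp only [G, ← Complex.re_sum, ← mul_sum, hχ₀, mul_zero, Complex.zero_re]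
  have hsub : ({d : Fin P → α | P * μ ≤ ‖∑ p, χ (d p)‖} : Finset (Fin P → α))
      ⊆ univ.biUnion fun k => {d : Fin P → α | P * (μ / 2) ≤ ∑ p, G k (d p)} := by
    intro d hd
    obtain ⟨k, hk⟩ := (∑ p, χ (d p)).exists_norm_le_two_mul_re_I_pow_mul
    simp only [mem_biUnion, mem_univ, mem_filter, true_and, G, ← Complex.re_sum, ← mul_sum] at hd ⊢
    exact ⟨k, by linarith⟩
  calc (#{d : Fin P → α | P * μ ≤ ‖∑ p, χ (d p)‖} : ℝ)
      ≤ ∑ k, (#{d : Fin P → α | P * (μ / 2) ≤ ∑ p, G k (d p)} : ℝ) := by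
        exact_mod_cast (card_le_card hsub).trans card_biUnion_le
    _ ≤ ∑ _k : Fin 4, Real.exp (-((μ / 2) ^ 2 * P / 2)) * Fintype.card α ^ P :=
        sum_le_sum fun k _ => card_filter_sum_ge_le (hG k) (hG₀ k) P (by positivity)
    _ = 4 * Real.exp (-(μ ^ 2) * P / 8) * Fintype.card α ^ P := by
        rw [sum_const, card_univ, Fintype.card_fin, nsmul_eq_mul]
        ring_nf

end ComplexHoeffding

lemma sum_pow_val_sum_mul_eq_zero {R : Type*} [CommRing R] [IsDomain R] {q : ℕ} [NeZero q]
    {ι : Type*} [Fintype ι] [DecidableEq ι] {ω : R} (hω : IsPrimitiveRoot ω q) {a : ι → ZMod q}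
    (ha : a ≠ 0) :
    ∑ v : ι → ZMod q, ω ^ (∑ i, v i * a i).val = 0 := by
  let ψ := AddChar.zmodChar q hω.pow_eq_one
  let φ : AddChar (ι → ZMod q) R := ψ.compAddMonoidHom <|
    AddMonoidHom.mk' (fun v => ∑ i, v i * a i) fun v w => by simp [add_mul, sum_add_distrib]
  obtain ⟨i, hi⟩ := Function.ne_iff.mp ha
  have hφ : φ ≠ 1 := AddChar.ne_one_iff.mpr ⟨Pi.single i 1, by
    simpa [φ, Pi.single_apply] using
      ((AddChar.zmodChar_primitive_of_primitive_root q hω).zmod_char_eq_one_iff q (a i)).not.mpr hi⟩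
  exact AddChar.sum_eq_zero_of_ne_one hφ

open scoped Classical in
theorem random_offset_sum_tail_general
    (q n P : ℕ) [NeZero q]
    (ω : ℂ) (hω : ω = Complex.exp (2 * (Real.pi : ℂ) * Complex.I / (q : ℂ)))
    (a : Fin n → ZMod q) (ha : a ≠ 0) (μ₀ : ℝ) (hμ₀ : 0 < μ₀) :
    ((Finset.univ.filter (fun d : Fin P → Fin n → ZMod q =>
        (P : ℝ) * μ₀ ≤ ‖∑ p, ω ^ (∑ i, d p i * a i).val‖)).card : ℝ) /
      (Fintype.card (Fin P → Fin n → ZMod q) : ℝ)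
      ≤ 4 * Real.exp (-(μ₀ ^ 2) * P / 8) := by
  have hω' : IsPrimitiveRoot ω q := hω ▸ Complex.isPrimitiveRoot_exp q (NeZero.ne q)
  have hnorm : ∀ v : Fin n → ZMod q, ‖ω ^ (∑ i, v i * a i).val‖ ≤ 1 := fun v => by
    rw [norm_pow, hω'.norm'_eq_one (NeZero.ne q), one_pow]
  rw [Fintype.card_fun, Fintype.card_fin, Nat.cast_pow, div_le_iff₀ (by positivity)]
  exact card_filter_norm_sum_ge_le hnorm (sum_pow_val_sum_mul_eq_zero hω' ha) P hμ₀.le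

open scoped Classical in
/-- For nonzero `a ∈ (ZMod q)^n` and `d_1, …, d_P` drawn independently
and uniformly at random from `(ZMod q)^n`, for every `μ₀ > 0`,
`ℙ(|Σ_p ω^⟨d_p, a⟩| ≥ P·μ₀) ≤ 4·exp(−μ₀²·P/8)`. -/
theorem random_offset_sum_tail
    (q n P : ℕ) [NeZero q] (hq : 2 ≤ q) (hn : 1 ≤ n) (hP : 1 ≤ P)
    (ω : ℂ) (hω : ω = Complex.exp (2 * (Real.pi : ℂ) * Complex.I / (q : ℂ)))
    (a : Fin n → ZMod q) (ha : a ≠ 0) (μ₀ : ℝ) (hμ₀ : 0 < μ₀) :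
    ((Finset.univ.filter (fun d : Fin P → Fin n → ZMod q =>
        (P : ℝ) * μ₀ ≤ ‖∑ p, ω ^ (∑ i, d p i * a i).val‖)).card : ℝ) /
      (Fintype.card (Fin P → Fin n → ZMod q) : ℝ)
      ≤ 4 * Real.exp (-(μ₀ ^ 2) * P / 8) :=
  random_offset_sum_tail_general q n P ω hω a ha μ₀ hμ₀
end

section
/- Let q ≥ 2, n ≥ 1, P ≥ 1 and N = q^n. Draw offsets d_1, …, d_P independently and uniformly at random from (ZMod q)^n, and for each k ∈ (ZMod q)^n define the signature vector s_k ∈ ℂ^P by s_k[p] = ω^{⟨d_p, k⟩}. Let μ = max_{k ≠ m} (1/P)·|s_kᴴ s_m| be the mutual coherence of the matrix whose columns are the s_k. Then for every μ₀ > 0, ℙ( μ ≥ μ₀ ) ≤ 4·N²·exp( −μ₀²·P / 8 ). -/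
/-!
For `k ≠ m` the `p`-th term of `s_kᴴ s_m` is `ψ ⟨d_p, m - k⟩`, where `ψ` is the standard additive
character of `ZMod q`, so the coherence event lies in the union over the nonzero `c` of the events
`P μ₀ ≤ |∑_p ψ ⟨d_p, c⟩|`. For `c ≠ 0` the character `x ↦ ψ ⟨x, c⟩` has mean zero, so the real
and imaginary parts of this sum are sums of `P` independent centred variables bounded by `1`.
Each event has at most `4 N^P exp (-P μ₀² / 4)` outcomes by Hoeffding's inequality, proved by
counting: convexity gives `exp (t y) ≤ cosh t + y sinh t` for `|y| ≤ 1`, so a mean-zero `f` with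
`|f| ≤ 1` has `∑ₓ exp (t f x) ≤ |α| cosh t ≤ |α| exp (t² / 2)`, and the exponential Markov
inequality with `t = ε` finishes.
-/

open Finset Real

lemma exp_mul_le_cosh_add_mul_sinh_s11 (t : ℝ) {y : ℝ} (hy : |y| ≤ 1) :
    exp (t * y) ≤ cosh t + y * sinh t := by
  obtain ⟨hy₁, hy₂⟩ := abs_le.mp hy
  have hconv := convexOn_exp.2 (Set.mem_univ t) (Set.mem_univ (-t))
    (show 0 ≤ (1 + y) / 2 by linarith) (show 0 ≤ (1 - y) / 2 by linarith) (by ring)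
  simp only [smul_eq_mul] at hconv
  calc exp (t * y) = exp ((1 + y) / 2 * t + (1 - y) / 2 * -t) := by ring_nf
    _ ≤ (1 + y) / 2 * exp t + (1 - y) / 2 * exp (-t) := hconv
    _ = cosh t + y * sinh t := by rw [cosh_eq, sinh_eq]; ring

section Hoeffding

variable {α : Type*} [Fintype α] {f : α → ℝ}

lemma sum_exp_mul_le_card_mul_exp_s11 (hf : ∀ x, |f x| ≤ 1) (hf₀ : ∑ x, f x = 0) (t : ℝ) :
    ∑ x, exp (t * f x) ≤ Fintype.card α * exp (t ^ 2 / 2) :=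
  calc ∑ x, exp (t * f x) ≤ ∑ x, (cosh t + f x * sinh t) :=
        sum_le_sum fun x _ => exp_mul_le_cosh_add_mul_sinh_s11 t (hf x)
    _ = Fintype.card α * cosh t := by
        rw [sum_add_distrib, ← sum_mul, hf₀, zero_mul, add_zero, sum_const, nsmul_eq_mul, card_univ]
    _ ≤ Fintype.card α * exp (t ^ 2 / 2) := by gcongr; exact cosh_le_exp_half_sq t

lemma card_filter_le_sum_le (P : ℕ) (hf : ∀ x, |f x| ≤ 1) (hf₀ : ∑ x, f x = 0) {ε : ℝ}
    (hε : 0 ≤ ε) :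
    (#{d : Fin P → α | P * ε ≤ ∑ p, f (d p)} : ℝ)
      ≤ Fintype.card α ^ P * exp (-(P * ε ^ 2 / 2)) := by
  have hmarkov : (#{d : Fin P → α | P * ε ≤ ∑ p, f (d p)} : ℝ)
      ≤ ∑ d : Fin P → α, exp (ε * ∑ p, f (d p) - P * ε ^ 2) := by
    rw [natCast_card_filter]
    gcongr with d
    split_ifs with hd
    · exact one_le_exp (by nlinarith)
    · exact (exp_pos _).le
  calc (#{d : Fin P → α | P * ε ≤ ∑ p, f (d p)} : ℝ)
      ≤ ∑ d : Fin P → α, exp (ε * ∑ p, f (d p) - P * ε ^ 2) := hmarkov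
    _ = exp (-(P * ε ^ 2)) * (∑ x, exp (ε * f x)) ^ P := by
        rw [Fintype.sum_pow, mul_sum]
        refine sum_congr rfl fun d _ => ?_
        rw [← exp_sum, ← exp_add, mul_sum]
        ring_nf
    _ ≤ exp (-(P * ε ^ 2)) * (Fintype.card α * exp (ε ^ 2 / 2)) ^ P := by
        gcongr
        exact sum_exp_mul_le_card_mul_exp_s11 hf hf₀ ε
    _ = Fintype.card α ^ P * exp (-(P * ε ^ 2 / 2)) := by
        rw [mul_pow, ← exp_nat_mul, mul_left_comm, ← exp_add]
        ring_nf

lemma card_filter_le_abs_sum_le (P : ℕ) (hf : ∀ x, |f x| ≤ 1) (hf₀ : ∑ x, f x = 0) {ε : ℝ}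
    (hε : 0 ≤ ε) :
    (#{d : Fin P → α | P * ε ≤ |∑ p, f (d p)|} : ℝ)
      ≤ 2 * (Fintype.card α ^ P * exp (-(P * ε ^ 2 / 2))) := by
  classical
  have hneg : (#{d : Fin P → α | P * ε ≤ -∑ p, f (d p)} : ℝ)
      ≤ Fintype.card α ^ P * exp (-(P * ε ^ 2 / 2)) := by
    simpa only [Pi.neg_apply, sum_neg_distrib] using card_filter_le_sum_le (f := -f) P
      (by simpa only [Pi.neg_apply, abs_neg] using hf) (by simp [hf₀]) hε
  calc (#{d : Fin P → α | P * ε ≤ |∑ p, f (d p)|} : ℝ)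
      ≤ #{d : Fin P → α | P * ε ≤ ∑ p, f (d p)} + #{d : Fin P → α | P * ε ≤ -∑ p, f (d p)} := by
        simp_rw [le_abs, filter_or]
        exact_mod_cast card_union_le _ _
    _ ≤ 2 * (Fintype.card α ^ P * exp (-(P * ε ^ 2 / 2))) := by
        linarith [card_filter_le_sum_le P hf hf₀ hε]

lemma card_filter_le_norm_sum_le (P : ℕ) {g : α → ℂ} (hg : ∀ x, ‖g x‖ ≤ 1) (hg₀ : ∑ x, g x = 0)
    {ε : ℝ} (hε : 0 ≤ ε) :
    (#{d : Fin P → α | P * ε ≤ ‖∑ p, g (d p)‖} : ℝ)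
      ≤ 4 * (Fintype.card α ^ P * exp (-(P * ε ^ 2 / 4))) := by
  classical
  set δ := ε / √2
  have hδ : 0 ≤ δ := by positivity
  have hδε : P * ε ^ 2 / 4 = P * δ ^ 2 / 2 := by
    rw [div_pow, sq_sqrt zero_le_two]; ring
  have hsplit : ∀ z : ℂ, P * ε ≤ ‖z‖ → P * δ ≤ |z.re| ∨ P * δ ≤ |z.im| := fun z hz => by
    by_contra! hsmall
    have : ‖z‖ < P * ε :=
      calc ‖z‖ ≤ √2 * max |z.re| |z.im| := Complex.norm_le_sqrt_two_mul_max z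
        _ < √2 * (P * δ) := by gcongr; exact max_lt hsmall.1 hsmall.2
        _ = P * ε := by rw [mul_left_comm, mul_div_cancel₀ _ (by positivity)]
    linarith
  have hre := card_filter_le_abs_sum_le P (f := fun x => (g x).re)
    (fun x => (Complex.abs_re_le_norm _).trans (hg x)) (by rw [← Complex.re_sum, hg₀]; rfl) hδ
  have him := card_filter_le_abs_sum_le P (f := fun x => (g x).im)
    (fun x => (Complex.abs_im_le_norm _).trans (hg x)) (by rw [← Complex.im_sum, hg₀]; rfl) hδ
  calc (#{d : Fin P → α | P * ε ≤ ‖∑ p, g (d p)‖} : ℝ)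
      ≤ #{d : Fin P → α | P * δ ≤ |∑ p, (g (d p)).re| ∨ P * δ ≤ |∑ p, (g (d p)).im|} := by
        gcongr with d
        intro hd
        simpa only [Complex.re_sum, Complex.im_sum] using hsplit _ hd
    _ ≤ #{d : Fin P → α | P * δ ≤ |∑ p, (g (d p)).re|}
          + #{d : Fin P → α | P * δ ≤ |∑ p, (g (d p)).im|} := by
        rw [filter_or]
        exact_mod_cast card_union_le _ _
    _ ≤ 4 * (Fintype.card α ^ P * exp (-(P * ε ^ 2 / 4))) := by
        rw [hδε]
        linarith

lemma card_filter_exists_le_norm_sum_le {ι : Type*} [Fintype ι] (P : ℕ) {g : ι → α → ℂ}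
    (hg : ∀ i x, ‖g i x‖ ≤ 1) (hg₀ : ∀ i, ∑ x, g i x = 0) {ε : ℝ} (hε : 0 ≤ ε) :
    (#{d : Fin P → α | ∃ i, P * ε ≤ ‖∑ p, g i (d p)‖} : ℝ)
      ≤ Fintype.card ι * (4 * (Fintype.card α ^ P * exp (-(P * ε ^ 2 / 4)))) := by
  classical
  have hunion : ({d : Fin P → α | ∃ i, P * ε ≤ ‖∑ p, g i (d p)‖} : Finset _)
      = univ.biUnion fun i => {d : Fin P → α | P * ε ≤ ‖∑ p, g i (d p)‖} := by
    ext d; simp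
  calc (#{d : Fin P → α | ∃ i, P * ε ≤ ‖∑ p, g i (d p)‖} : ℝ)
      ≤ ∑ i, (#{d : Fin P → α | P * ε ≤ ‖∑ p, g i (d p)‖} : ℝ) := by
        rw [hunion]; exact_mod_cast card_biUnion_le
    _ ≤ ∑ _i : ι, 4 * (Fintype.card α ^ P * exp (-(P * ε ^ 2 / 4))) :=
        sum_le_sum fun i _ => card_filter_le_norm_sum_le P (hg i) (hg₀ i) hε
    _ = Fintype.card ι * (4 * (Fintype.card α ^ P * exp (-(P * ε ^ 2 / 4)))) := by
        rw [sum_const, card_univ, nsmul_eq_mul]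

end Hoeffding

namespace AddChar

variable {R R' ι : Type*} [CommRing R] [Fintype R] [CommRing R'] [IsDomain R']
  [Fintype ι] [DecidableEq ι]

lemma sum_apply_dotProduct_eq_zero {ψ : AddChar R R'} (hψ : ψ.IsPrimitive) {c : ι → R}
    (hc : c ≠ 0) : ∑ x : ι → R, ψ (x ⬝ᵥ c) = 0 := by
  classical
  let φ : AddChar (ι → R) R' :=
    ψ.compAddMonoidHom (AddMonoidHom.mk' (· ⬝ᵥ c) fun x y => add_dotProduct x y c)
  obtain ⟨j, hj⟩ := Function.ne_iff.mp hc
  obtain ⟨y, hy⟩ := ne_one_iff.mp (hψ hj)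
  have hφ : φ ≠ 0 := ne_zero_iff.mpr ⟨Pi.single j y, by
    simpa [φ, single_dotProduct, mul_comm] using hy⟩
  have hsum := φ.sum_eq_ite
  rwa [if_neg hφ] at hsum

end AddChar

lemma pow_val_eq_stdAddChar {q : ℕ} [NeZero q] (x : ZMod q) :
    Complex.exp (2 * π * Complex.I / q) ^ x.val = ZMod.stdAddChar x := by
  rw [ZMod.stdAddChar_apply, ZMod.toCircle_apply, ← Complex.exp_nat_mul]
  ring_nf

open scoped Classical in
theorem mutual_coherence_tail_general
    (q n P : ℕ) [NeZero q]
    (ω : ℂ) (hω : ω = Complex.exp (2 * (Real.pi : ℂ) * Complex.I / (q : ℂ)))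
    (μ₀ : ℝ) (hμ₀ : 0 < μ₀) :
    ((Finset.univ.filter (fun d : Fin P → Fin n → ZMod q =>
        ∃ k m : Fin n → ZMod q, k ≠ m ∧
          (P : ℝ) * μ₀ ≤ ‖∑ p,
            (starRingEnd ℂ) (ω ^ (∑ i, d p i * k i).val) *
              ω ^ (∑ i, d p i * m i).val‖)).card : ℝ) /
      (Fintype.card (Fin P → Fin n → ZMod q) : ℝ)
      ≤ 4 * ((q : ℝ) ^ n) ^ 2 * Real.exp (-(μ₀ ^ 2) * P / 8) := by
  subst hω
  set N : ℝ := (q : ℝ) ^ n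
  have hN : 1 ≤ N := one_le_pow₀ (mod_cast NeZero.one_le)
  let g : {c : Fin n → ZMod q // c ≠ 0} → (Fin n → ZMod q) → ℂ :=
    fun c x => ZMod.stdAddChar (x ⬝ᵥ c)
  have hcard : (Fintype.card (Fin P → Fin n → ZMod q) : ℝ) = N ^ P := by simp [N]
  have hexp : -(P * μ₀ ^ 2 / 4) ≤ -(μ₀ ^ 2) * P / 8 := by
    nlinarith [mul_nonneg (sq_nonneg μ₀) (Nat.cast_nonneg (α := ℝ) P)]
  rw [hcard, div_le_iff₀ (by positivity)]
  calc _ ≤ (#{d : Fin P → Fin n → ZMod q | ∃ c, P * μ₀ ≤ ‖∑ p, g c (d p)‖} : ℝ) := by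
        gcongr with d
        rintro ⟨k, m, hkm, hd⟩
        -- `conj (ψ a) * ψ b = ψ (b - a)`, so `c = m - k` witnesses the pair `k ≠ m`
        refine ⟨⟨m - k, sub_ne_zero.2 hkm.symm⟩, ?_⟩
        simpa [g, pow_val_eq_stdAddChar, ← AddChar.map_neg_eq_conj, ← AddChar.map_add_eq_mul,
          neg_add_eq_sub, dotProduct, mul_sub, sum_sub_distrib] using hd
    _ ≤ Fintype.card {c : Fin n → ZMod q // c ≠ 0} * (4 * (N ^ P * exp (-(P * μ₀ ^ 2 / 4)))) := by
        simpa [N] using card_filter_exists_le_norm_sum_le P (g := g)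
          (fun c x => (AddChar.norm_apply _ _).le)
          (fun c => AddChar.sum_apply_dotProduct_eq_zero (ZMod.isPrimitive_stdAddChar q) c.2) hμ₀.le
    _ ≤ N * (4 * (N ^ P * exp (-(μ₀ ^ 2) * P / 8))) := by
        gcongr
        exact (Nat.cast_le.2 (Fintype.card_subtype_le _)).trans_eq (by simp [N])
    _ ≤ 4 * N ^ 2 * exp (-(μ₀ ^ 2) * P / 8) * N ^ P := by
        have : 0 ≤ N * (N ^ P * exp (-(μ₀ ^ 2) * P / 8)) := by positivity
        nlinarith [mul_le_mul_of_nonneg_left hN this]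

open scoped Classical in
/-- mutual coherence bound: draw `d_1, …, d_P` i.i.d. uniform on
`(ZMod q)^n` and set `s_k[p] = ω^⟨d_p, k⟩`. With
`μ = max_{k ≠ m} (1/P)·|s_kᴴ s_m|` the mutual coherence, for every `μ₀ > 0`,
`ℙ(μ ≥ μ₀) ≤ 4·N²·exp(−μ₀²·P/8)` where `N = q^n`. The event `μ ≥ μ₀` is expressed as
the existence of a pair `k ≠ m` with `(1/P)·|s_kᴴ s_m| ≥ μ₀`. -/
theorem mutual_coherence_tail
    (q n P : ℕ) [NeZero q] (hq : 2 ≤ q) (hn : 1 ≤ n) (hP : 1 ≤ P)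
    (ω : ℂ) (hω : ω = Complex.exp (2 * (Real.pi : ℂ) * Complex.I / (q : ℂ)))
    (μ₀ : ℝ) (hμ₀ : 0 < μ₀) :
    ((Finset.univ.filter (fun d : Fin P → Fin n → ZMod q =>
        ∃ k m : Fin n → ZMod q, k ≠ m ∧
          (P : ℝ) * μ₀ ≤ ‖∑ p,
            (starRingEnd ℂ) (ω ^ (∑ i, d p i * k i).val) *
              ω ^ (∑ i, d p i * m i).val‖)).card : ℝ) /
      (Fintype.card (Fin P → Fin n → ZMod q) : ℝ)
      ≤ 4 * ((q : ℝ) ^ n) ^ 2 * Real.exp (-(μ₀ ^ 2) * P / 8) :=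
  mutual_coherence_tail_general q n P ω hω μ₀ hμ₀
end

section
/- Let P ≥ 1, ν > 0, ρ > 0, and let s ∈ ℂ^P be a vector all of whose entries have modulus 1. Let F ∈ ℂ with |F| = ρ, and let W be a random vector in ℂ^P with i.i.d. complex Gaussian entries CN(0, ν²). Then for any γ with 0 < γ < ρ²/ν², ℙ( (1/P)·‖F·s + W‖² ≤ (1 + γ)·ν² ) ≤ exp( −(P/2)·(ρ²/ν² − γ)² / (1 + 2ρ²/ν²) ). (This bounds the probability that a singleton bin is missed, i.e., incorrectly passes the zero-ton verification test.) -/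
/-!
Chernoff bound. Put `a = ρ²/ν²`. For `τ ≥ 0` a Gaussian integral gives
`𝔼 exp (-τ |F s_p + W_p|²) = (1 + τν²)⁻¹ exp (-τρ² / (1 + τν²))`, so the Chernoff bound with
`τ = u/ν²` bounds the probability by the `P`-th power of
`exp (u (1 + γ)) (1 + u)⁻¹ exp (-u a / (1 + u))`.
Since `log (1 + u) ≥ u - u²/2` and `1/(1 + u) ≥ 1 - u`, the logarithm of this factor is at most
`-(u (a - γ) - u² (1 + 2a)/2)`. Taking `u = (a - γ)/(1 + 2a)`, the maximizer of that quadratic,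
turns it into `-(a - γ)² / (2 (1 + 2a))`.
-/

open MeasureTheory ProbabilityTheory Real
open scoped NNReal

theorem measureReal_pi_sum_le_le_exp_mul_prod_integral {ι : Type*} [Fintype ι] {E : ι → Type*}
    {mE : ∀ i, MeasurableSpace (E i)} {μ : ∀ i, Measure (E i)} [∀ i, IsProbabilityMeasure (μ i)]
    {f : ∀ i, E i → ℝ} (hf : ∀ i, Measurable (f i)) (hf₀ : ∀ i x, 0 ≤ f i x)
    {t : ℝ} (ht : 0 ≤ t) (ε : ℝ) :
    (Measure.pi μ).real {x | ∑ i, f i (x i) ≤ ε}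
      ≤ exp (t * ε) * ∏ i, ∫ y, exp (-(t * f i y)) ∂(μ i) := by
  have hsum : Measurable fun x : ∀ i, E i => ∑ i, f i (x i) :=
    Finset.measurable_sum _ fun i _ => (hf i).comp (measurable_pi_apply i)
  have hint : Integrable (fun x => exp (-t * ∑ i, f i (x i))) (Measure.pi μ) := by
    refine Integrable.of_bound (hsum.const_mul _).exp.aestronglyMeasurable 1
      (ae_of_all _ fun x => ?_)
    rw [norm_of_nonneg (exp_pos _).le, exp_le_one_iff, neg_mul]
    exact neg_nonpos.2 (mul_nonneg ht (Finset.sum_nonneg fun i _ => hf₀ i _))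
  calc _ ≤ exp (- -t * ε) * mgf (fun x => ∑ i, f i (x i)) (Measure.pi μ) (-t) :=
        measure_le_le_exp_mul_mgf ε (neg_nonpos.2 ht) hint
    _ = _ := by
      rw [neg_neg, mgf, ← integral_fintype_prod_eq_prod]
      simp_rw [← exp_sum, Finset.mul_sum, neg_mul]

theorem integral_exp_neg_mul_sq_gaussianReal (μ : ℝ) (v : ℝ≥0) {t : ℝ}
    (ht : 0 < 1 + 2 * v * t) :
    ∫ x, exp (-(t * x ^ 2)) ∂gaussianReal μ v
      = (√(1 + 2 * v * t))⁻¹ * exp (-(t * μ ^ 2) / (1 + 2 * v * t)) := by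
  rcases eq_or_ne v 0 with rfl | hv
  · simp [gaussianReal_zero_var]
  have hv₀ : (0 : ℝ) < v := by positivity
  set b := (1 + 2 * v * t) / (2 * v)
  have hb : 0 < b := by positivity
  have hsq : ∀ x : ℝ, gaussianPDFReal μ v x • exp (-(t * x ^ 2))
      = ((√(2 * π * v))⁻¹ * exp (-(t * μ ^ 2) / (1 + 2 * v * t)))
          * exp (-b * (x - μ / (1 + 2 * v * t)) ^ 2) := by
    intro x
    rw [gaussianPDFReal, smul_eq_mul]
    simp only [mul_assoc, ← exp_add]
    congr 2
    unfold b
    field_simp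
    ring
  have hshift : ∫ x : ℝ, exp (-b * (x - μ / (1 + 2 * v * t)) ^ 2) = √(π / b) := by
    rw [integral_sub_right_eq_self (fun x => exp (-b * x ^ 2)), integral_gaussian]
  have hconst : (√(2 * π * v))⁻¹ * √(π / b) = (√(1 + 2 * v * t))⁻¹ := by
    rw [show π / b = 2 * π * v / (1 + 2 * v * t) by unfold b; field_simp,
      sqrt_div (by positivity)]
    have : √(2 * π * v) ≠ 0 := by positivity
    field_simp
  rw [integral_gaussianReal_eq_integral_smul hv, funext hsq, integral_const_mul, hshift,
    mul_right_comm, hconst]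

theorem integral_exp_neg_mul_add_sq_gaussianReal (a : ℝ) (v : ℝ≥0) {t : ℝ}
    (ht : 0 < 1 + 2 * v * t) :
    ∫ x, exp (-(t * (a + x) ^ 2)) ∂gaussianReal 0 v
      = (√(1 + 2 * v * t))⁻¹ * exp (-(t * a ^ 2) / (1 + 2 * v * t)) := by
  have hmap : (gaussianReal 0 v).map (a + ·) = gaussianReal a v := by
    simpa using gaussianReal_map_const_add (μ := 0) (v := v) a
  rw [← integral_exp_neg_mul_sq_gaussianReal a v ht, ← hmap,
    integral_map (measurable_const_add _).aemeasurable (by fun_prop)]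

theorem integral_exp_neg_mul_norm_add_sq_gaussianReal_prod (z : ℂ) (v : ℝ≥0) {t : ℝ}
    (ht : 0 < 1 + 2 * v * t) :
    ∫ y, exp (-(t * ‖z + ((y.1 : ℂ) + (y.2 : ℂ) * Complex.I)‖ ^ 2))
        ∂(gaussianReal 0 v).prod (gaussianReal 0 v)
      = (1 + 2 * v * t)⁻¹ * exp (-(t * ‖z‖ ^ 2) / (1 + 2 * v * t)) := by
  have hsplit : ∀ y : ℝ × ℝ, exp (-(t * ‖z + ((y.1 : ℂ) + (y.2 : ℂ) * Complex.I)‖ ^ 2))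
      = exp (-(t * (z.re + y.1) ^ 2)) * exp (-(t * (z.im + y.2) ^ 2)) := by
    intro y
    rw [← exp_add, Complex.sq_norm, Complex.normSq_apply]
    simp only [Complex.add_re, Complex.ofReal_re, Complex.mul_re, Complex.I_re, mul_zero,
      Complex.ofReal_im, Complex.I_im, mul_one, sub_self, add_zero, Complex.add_im,
      Complex.mul_im, zero_add, exp_eq_exp]
    ring
  have hsqrt : √(1 + 2 * v * t) * √(1 + 2 * v * t) = 1 + 2 * v * t := mul_self_sqrt ht.le
  rw [funext hsplit, integral_prod_mul (fun x => exp (-(t * (z.re + x) ^ 2)))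
      (fun x => exp (-(t * (z.im + x) ^ 2))),
    integral_exp_neg_mul_add_sq_gaussianReal _ _ ht,
    integral_exp_neg_mul_add_sq_gaussianReal _ _ ht,
    mul_mul_mul_comm, ← mul_inv, hsqrt, ← exp_add, Complex.sq_norm, Complex.normSq_apply]
  congr 2
  ring

theorem measureReal_sum_norm_add_sq_le {ι : Type*} [Fintype ι] (z : ι → ℂ) {ρ : ℝ}
    (hz : ∀ i, ‖z i‖ = ρ) (v : ℝ≥0) {t : ℝ} (ht : 0 ≤ t) (ε : ℝ) :
    (Measure.pi fun _ : ι => (gaussianReal 0 v).prod (gaussianReal 0 v)).real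
        {x | ∑ i, ‖z i + (((x i).1 : ℂ) + ((x i).2 : ℂ) * Complex.I)‖ ^ 2 ≤ ε}
      ≤ exp (t * ε)
          * ((1 + 2 * v * t)⁻¹ * exp (-(t * ρ ^ 2) / (1 + 2 * v * t))) ^ Fintype.card ι := by
  have hvt : 0 < 1 + 2 * v * t := by positivity
  have h := measureReal_pi_sum_le_le_exp_mul_prod_integral
    (μ := fun _ : ι => (gaussianReal 0 v).prod (gaussianReal 0 v))
    (f := fun i y => ‖z i + ((y.1 : ℂ) + (y.2 : ℂ) * Complex.I)‖ ^ 2)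
    (fun i => by fun_prop) (fun i y => by positivity) ht ε
  simpa only [integral_exp_neg_mul_norm_add_sq_gaussianReal_prod _ _ hvt, hz, Finset.prod_const,
    Finset.card_univ] using h

theorem sub_sq_div_two_le_log_one_add {x : ℝ} (hx : 0 ≤ x) : x - x ^ 2 / 2 ≤ log (1 + x) := by
  refine le_trans ?_ (le_log_one_add_of_nonneg hx)
  rw [le_div_iff₀ (by linarith)]
  nlinarith [pow_nonneg hx 3]

theorem exp_mul_inv_one_add_mul_exp_le {a γ u : ℝ} (ha : 0 ≤ a) (hu₀ : 0 ≤ u)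
    (hu : u * (1 + 2 * a) = a - γ) :
    exp (u * (1 + γ)) * ((1 + u)⁻¹ * exp (-(u * a) / (1 + u)))
      ≤ exp (-((a - γ) ^ 2 / (2 * (1 + 2 * a)))) := by
  have h1u : 0 < 1 + u := by linarith
  have hlog := sub_sq_div_two_le_log_one_add hu₀
  have hfrac : u * a * (1 - u) ≤ u * a / (1 + u) := by
    rw [le_div_iff₀ h1u]
    nlinarith [mul_nonneg (mul_nonneg hu₀ ha) (sq_nonneg u)]
  have hsq : (a - γ) ^ 2 / (2 * (1 + 2 * a)) = u * (a - γ) / 2 := by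
    rw [← hu]
    field_simp
  have hu2 : u * (u * (1 + 2 * a)) = u * (a - γ) := by rw [hu]
  calc exp (u * (1 + γ)) * ((1 + u)⁻¹ * exp (-(u * a) / (1 + u)))
      = exp (u * (1 + γ) - log (1 + u) - u * a / (1 + u)) := by
        rw [exp_sub, exp_sub, exp_log h1u, neg_div, exp_neg]
        field_simp
    _ ≤ exp (-((a - γ) ^ 2 / (2 * (1 + 2 * a)))) := by
        rw [exp_le_exp, hsq]
        linarith

theorem singleton_missed_verification_bound_general
    (P : ℕ) (ν ρ : ℝ) (hν : 0 < ν)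
    (s : Fin P → ℂ) (hs : ∀ p, ‖s p‖ = 1)
    (F : ℂ) (hF : ‖F‖ = ρ)
    (γ : ℝ) (hγ₂ : γ < ρ ^ 2 / ν ^ 2) :
    (Measure.pi (fun _ : Fin P =>
        (gaussianReal 0 ((ν ^ 2 / 2).toNNReal)).prod (gaussianReal 0 ((ν ^ 2 / 2).toNNReal))))
        {x : Fin P → ℝ × ℝ |
          (1 / (P : ℝ)) *
            ∑ p, ‖F * s p + (((x p).1 : ℂ) + ((x p).2 : ℂ) * Complex.I)‖ ^ 2
            ≤ (1 + γ) * ν ^ 2}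
      ≤ ENNReal.ofReal (Real.exp (-((P : ℝ) / 2) *
          (ρ ^ 2 / ν ^ 2 - γ) ^ 2 / (1 + 2 * ρ ^ 2 / ν ^ 2))) := by
  set a := ρ ^ 2 / ν ^ 2
  set u := (a - γ) / (1 + 2 * a)
  set v := (ν ^ 2 / 2).toNNReal
  have ha : 0 ≤ a := by positivity
  have hu₀ : 0 ≤ u := div_nonneg (by linarith) (by positivity)
  have hu : u * (1 + 2 * a) = a - γ := div_mul_cancel₀ _ (by positivity)
  have hvu : 1 + 2 * v * (u / ν ^ 2) = 1 + u := by
    rw [Real.coe_toNNReal _ (by positivity)]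
    field_simp
  have hchernoff := measureReal_sum_norm_add_sq_le (fun p => F * s p)
    (fun p => by rw [norm_mul, hs, hF, mul_one]) v (div_nonneg hu₀ (sq_nonneg ν))
    (P * ((1 + γ) * ν ^ 2))
  rw [hvu, Fintype.card_fin] at hchernoff
  rw [← ofReal_measureReal]
  refine ENNReal.ofReal_le_ofReal ((measureReal_mono fun x hx => ?_).trans (hchernoff.trans ?_))
  · rcases P.eq_zero_or_pos with rfl | hP
    · simp -- `1 / 0 = 0`, but then the sum is empty
    · rwa [Set.mem_ofPred_eq, one_div, inv_mul_le_iff₀ (by positivity)] at hx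
  calc _ = (exp (u * (1 + γ)) * ((1 + u)⁻¹ * exp (-(u * a) / (1 + u)))) ^ P := by
        rw [mul_pow (exp _), ← exp_nat_mul, show u / ν ^ 2 * ρ ^ 2 = u * a by ring]
        congr 2
        field_simp
    _ ≤ exp (-((a - γ) ^ 2 / (2 * (1 + 2 * a)))) ^ P :=
        pow_le_pow_left₀ (by positivity) (exp_mul_inv_one_add_mul_exp_le ha hu₀ hu) P
    _ = _ := by
        rw [← exp_nat_mul, mul_div_assoc 2]
        congr 1
        unfold a
        field_simp

/-- missed singleton bound: let `s ∈ ℂ^P` have unit-modulus entries,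
`|F| = ρ`, and `W` have i.i.d. `CN(0, ν²)` entries. Then for `0 < γ < ρ²/ν²`,
`ℙ((1/P)‖F·s + W‖² ≤ (1 + γ)ν²) ≤ exp(−(P/2)(ρ²/ν² − γ)²/(1 + 2ρ²/ν²))`. -/
theorem singleton_missed_verification_bound
    (P : ℕ) (hP : 1 ≤ P) (ν ρ : ℝ) (hν : 0 < ν) (hρ : 0 < ρ)
    (s : Fin P → ℂ) (hs : ∀ p, ‖s p‖ = 1)
    (F : ℂ) (hF : ‖F‖ = ρ)
    (γ : ℝ) (hγ₁ : 0 < γ) (hγ₂ : γ < ρ ^ 2 / ν ^ 2) :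
    (Measure.pi (fun _ : Fin P =>
        (gaussianReal 0 ((ν ^ 2 / 2).toNNReal)).prod (gaussianReal 0 ((ν ^ 2 / 2).toNNReal))))
        {x : Fin P → ℝ × ℝ |
          (1 / (P : ℝ)) *
            ∑ p, ‖F * s p + (((x p).1 : ℂ) + ((x p).2 : ℂ) * Complex.I)‖ ^ 2
            ≤ (1 + γ) * ν ^ 2}
      ≤ ENNReal.ofReal (Real.exp (-((P : ℝ) / 2) *
          (ρ ^ 2 / ν ^ 2 - γ) ^ 2 / (1 + 2 * ρ ^ 2 / ν ^ 2))) :=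
  singleton_missed_verification_bound_general P ν ρ hν s hs F hF γ hγ₂
end

section
/- Density evolution convergence for the peeling decoder: let C ≥ 2 be an integer and η > 1 a real number. Define the sequence (p_i) by p_0 ∈ [0, 1] and p_{i+1} = (1 − exp(−p_i/η))^{C−1}. Then p_i ≤ p_0 / η^i for all i ≥ 0, and in particular p_i → 0 as i → ∞; i.e., for any number of subsampling groups C ≥ 2 there exists a redundancy parameter η such that the fraction of unpeeled edges under density evolution tends to zero. -/
/-- density evolution convergence: for an integer `C ≥ 2` and real
`η > 1`, the sequence defined by `p_0 ∈ [0, 1]` and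
`p_{i+1} = (1 − exp(−p_i/η))^{C−1}` satisfies `p_i ≤ p_0/η^i` for all `i`, and in
particular `p_i → 0` as `i → ∞`. -/
theorem density_evolution_convergence
    (C : ℕ) (hC : 2 ≤ C) (η : ℝ) (hη : 1 < η)
    (p : ℕ → ℝ) (hp0 : p 0 ∈ Set.Icc (0 : ℝ) 1)
    (hrec : ∀ i, p (i + 1) = (1 - Real.exp (-(p i) / η)) ^ (C - 1)) :
    (∀ i, p i ≤ p 0 / η ^ i) ∧
    Filter.Tendsto p Filter.atTop (nhds 0) := by
  have hη0 : (0 : ℝ) < η := lt_trans one_pos hη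
  have key : ∀ i, 0 ≤ p i ∧ p i ≤ 1 ∧ p i ≤ p 0 / η ^ i := by
    intro i
    induction i with
    | zero => exact ⟨hp0.1, hp0.2, by simp⟩
    | succ n ih =>
      obtain ⟨h0, h1, h2⟩ := ih
      set b := 1 - Real.exp (-(p n) / η) with hb
      have hexp1 : Real.exp (-(p n) / η) ≤ 1 := by
        rw [Real.exp_le_one_iff]
        exact div_nonpos_of_nonpos_of_nonneg (neg_nonpos.mpr h0) hη0.le
      have hb0 : 0 ≤ b := by rw [hb]; linarith
      have hb1 : b ≤ 1 := by
        have := Real.exp_pos (-(p n) / η)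
        rw [hb]; linarith
      have hble : b ≤ p n / η := by
        have h := Real.add_one_le_exp (-(p n) / η)
        have heq : -(p n) / η = -(p n / η) := by ring
        rw [heq] at h
        rw [hb, heq]; linarith
      have hCle : 1 ≤ C - 1 := by omega
      have hpow : b ^ (C - 1) ≤ b ^ 1 := pow_le_pow_of_le_one hb0 hb1 hCle
      have hle : p (n + 1) ≤ p n / η := by
        rw [hrec n, ← hb]
        calc b ^ (C - 1) ≤ b ^ 1 := hpow
        _ = b := pow_one b
        _ ≤ p n / η := hble
      refine ⟨by rw [hrec n, ← hb]; exact pow_nonneg hb0 _,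
        by rw [hrec n, ← hb]; exact pow_le_one₀ hb0 hb1, ?_⟩
      calc p (n + 1) ≤ p n / η := hle
        _ ≤ (p 0 / η ^ n) / η := by gcongr
        _ = p 0 / η ^ (n + 1) := by rw [pow_succ]; ring
  refine ⟨fun i => (key i).2.2, ?_⟩
  have htend : Filter.Tendsto (fun i => p 0 / η ^ i) Filter.atTop (nhds 0) := by
    have h : Filter.Tendsto (fun i : ℕ => p 0 * (1 / η) ^ i) Filter.atTop (nhds (p 0 * 0)) := by
      apply Filter.Tendsto.const_mul
      apply tendsto_pow_atTop_nhds_zero_of_lt_one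
      · positivity
      · rw [div_lt_one hη0]; exact hη
    simpa [div_eq_mul_inv, one_div, inv_pow] using h
  exact squeeze_zero (fun i => (key i).1) (fun i => (key i).2.2) htend
end
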